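/- arXiv:2002.01187 — 7 statements merged into one kernel-verified Lean document; each statement's English description precedes it below -/
import Mathlib

section
/- Let n, m be positive integers, 0 < λ < n, 1 < p < ∞, and D an n×m real matrix with rank(D) < m. If f ∈ L^p(ℝ^n) is nonnegative, not almost everywhere zero, then the function x ↦ ∫_{ℝ^n} f(y)/|Dx − y|^λ dy on ℝ^m is not in L^q(ℝ^m) for any 0 < q < ∞. -/
/-!
The potential `T x = ∫ f y * ‖D x - y‖ ^ (-λ) dy` is bounded below by a positive constant on
`{x | ‖D x‖ ≤ 1}`: if `f` has positive mass in the ball of radius `R`, the kernel is at least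
`(1 + R) ^ (-λ)` there. Since `rank D < m`, `D` kills some `v ≠ 0`, so that set contains the balls
of a fixed radius around all the points `t • v`, and has infinite measure. Hence `∫ T ^ q = ∞`.
-/

open MeasureTheory ENNReal

abbrev E (n : ℕ) : Type := EuclideanSpace ℝ (Fin n)

noncomputable def mvec {n m : ℕ} (D : Matrix (Fin n) (Fin m) ℝ) (x : E m) : E n :=
  (WithLp.equiv 2 (Fin n → ℝ)).symm (D.mulVec ((WithLp.equiv 2 (Fin m → ℝ)) x))

open Metric Topology Function Matrix

theorem Matrix.exists_ne_zero_mulVec_eq_zero_of_rank_lt {R ι κ : Type*} [CommRing R]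
    [StrongRankCondition R] [Fintype κ] {A : Matrix ι κ R}
    (h : A.rank < Fintype.card κ) : ∃ v ≠ 0, A *ᵥ v = 0 := by
  by_contra! hA
  refine h.ne ?_
  rw [Matrix.rank, LinearMap.finrank_range_of_inj, Module.finrank_fintype_fun_eq_card]
  exact (injective_iff_map_eq_zero _).2 fun v hv => by_contra fun hv0 => hA v hv0 hv

theorem measure_eq_top_of_forall_ball_smul_subset {V : Type*} [NormedAddCommGroup V]
    [NormedSpace ℝ V] [MeasurableSpace V] [BorelSpace V] (μ : Measure V) [μ.IsAddHaarMeasure]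
    {s : Set V} {v : V} (hv : v ≠ 0) {δ : ℝ} (hδ : 0 < δ) (hs : ∀ t : ℝ, ball (t • v) δ ⊆ s) :
    μ s = ⊤ := by
  set c : ℝ := 2 * δ / ‖v‖
  have hdisj : Pairwise (Disjoint on fun k : ℕ => ball ((c * k) • v) δ) := by
    intro i j hij
    apply ball_disjoint_ball
    have hij' : (1 : ℝ) ≤ |(i : ℝ) - j| := by
      exact_mod_cast Int.one_le_abs (sub_ne_zero.2 (Int.ofNat_inj.not.2 hij))
    calc δ + δ ≤ 2 * δ * |(i : ℝ) - j| := by nlinarith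
      _ = dist ((c * i) • v) ((c * j) • v) := by
        rw [dist_eq_norm, ← sub_smul, norm_smul, ← mul_sub, Real.norm_eq_abs, abs_mul,
          abs_of_pos (by positivity : 0 < c),
          mul_right_comm c, show c * ‖v‖ = 2 * δ from div_mul_cancel₀ _ (norm_ne_zero_iff.2 hv)]
  have hball : ∀ k : ℕ, μ (ball ((c * k) • v) δ) = μ (ball 0 δ) :=
    fun k => μ.addHaar_ball_center _ δ
  refine top_le_iff.1 (le_trans ?_ (measure_mono (Set.iUnion_subset fun k : ℕ => hs (c * k))))
  rw [measure_iUnion hdisj fun k => measurableSet_ball, tsum_congr hball,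
    ENNReal.tsum_const_eq_top_of_ne_zero (measure_ball_pos μ 0 hδ).ne']

theorem ContinuousLinearMap.measure_preimage_eq_top_of_apply_eq_zero {V W : Type*}
    [NormedAddCommGroup V] [NormedSpace ℝ V] [MeasurableSpace V] [BorelSpace V]
    [NormedAddCommGroup W] [NormedSpace ℝ W] (μ : Measure V) [μ.IsAddHaarMeasure]
    (L : V →L[ℝ] W) {v : V} (hv : v ≠ 0) (hLv : L v = 0) {U : Set W} (hU : U ∈ 𝓝 0) :
    μ (L ⁻¹' U) = ⊤ := by
  have h0 : L ⁻¹' U ∈ 𝓝 0 := L.continuous.continuousAt.preimage_mem_nhds (by rwa [map_zero])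
  obtain ⟨δ, hδ, hball⟩ := Metric.mem_nhds_iff.1 h0
  refine measure_eq_top_of_forall_ball_smul_subset μ hv hδ fun t x hx => ?_
  have hx' : x - t • v ∈ ball 0 δ := by rwa [mem_ball_zero_iff, ← dist_eq_norm]
  simpa [map_sub, map_smul, hLv] using hball hx'

theorem exists_setLIntegral_ball_ne_zero {V : Type*} [PseudoMetricSpace V] [MeasurableSpace V]
    [OpensMeasurableSpace V] {μ : Measure V} {F : V → ℝ≥0∞} (hF : ∫⁻ y, F y ∂μ ≠ 0) (x : V) :
    ∃ R : ℕ, ∫⁻ y in ball x R, F y ∂μ ≠ 0 := by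
  by_contra! h
  refine hF ?_
  rw [← setLIntegral_univ, ← iUnion_ball_nat x,
    ← withDensity_apply _ (MeasurableSet.iUnion fun _ => measurableSet_ball),
    measure_iUnion_null_iff]
  exact fun R => (withDensity_apply _ measurableSet_ball).trans (h R)

theorem exists_ne_zero_le_lintegral_mul_rpow_norm_sub {V : Type*} [NormedAddCommGroup V]
    [MeasurableSpace V] [OpensMeasurableSpace V] {μ : Measure V} [NullSingletonClass μ]
    {F : V → ℝ≥0∞} (hF : ∫⁻ y, F y ∂μ ≠ 0) {lam : ℝ} (hlam : 0 ≤ lam) {r : ℝ} (hr : 0 < r) :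
    ∃ ε ≠ 0, ∀ z : V, ‖z‖ ≤ r →
      ε ≤ ∫⁻ y, F y * ENNReal.ofReal (‖z - y‖ ^ (-lam)) ∂μ := by
  obtain ⟨R, hR⟩ := exists_setLIntegral_ball_ne_zero hF 0
  have hkernel : 0 < (r + R) ^ (-lam) := Real.rpow_pos_of_pos (by positivity) _
  refine ⟨(∫⁻ y in ball 0 R, F y ∂μ) * ENNReal.ofReal ((r + R) ^ (-lam)),
    mul_ne_zero hR (ENNReal.ofReal_pos.2 hkernel).ne', fun z hz => ?_⟩
  calc _ = ∫⁻ y in ball 0 R, F y * ENNReal.ofReal ((r + R) ^ (-lam)) ∂μ :=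
        (lintegral_mul_const' _ _ ENNReal.ofReal_ne_top).symm
    _ ≤ ∫⁻ y in ball 0 R, F y * ENNReal.ofReal (‖z - y‖ ^ (-lam)) ∂μ := by
        -- the kernel takes the junk value `0 ^ (-lam) = 0` at the null set `y = z`
        refine lintegral_mono_ae ?_
        filter_upwards [ae_restrict_mem measurableSet_ball, ae_restrict_of_ae (μ.ae_ne z)]
          with y hyR hyz
        gcongr F y * ENNReal.ofReal ?_
        refine Real.rpow_le_rpow_of_nonpos (norm_pos_iff.2 (sub_ne_zero.2 hyz.symm)) ?_
          (neg_nonpos.2 hlam)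
        calc ‖z - y‖ ≤ ‖z‖ + ‖y‖ := norm_sub_le z y
          _ ≤ r + R := add_le_add hz (mem_ball_zero_iff.1 hyR).le
    _ ≤ _ := setLIntegral_le_lintegral _ _

theorem lintegral_eq_top_of_le_on_measure_eq_top {α : Type*} [MeasurableSpace α]
    {μ : Measure α} {s : Set α} (hs : MeasurableSet s) (hμs : μ s = ⊤) {c : ℝ≥0∞} (hc : c ≠ 0)
    {g : α → ℝ≥0∞} (hg : ∀ x ∈ s, c ≤ g x) : ∫⁻ x, g x ∂μ = ⊤ :=
  top_le_iff.1 <| calc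
    ⊤ = ∫⁻ _ in s, c ∂μ := by rw [setLIntegral_const, hμs, mul_top hc]
    _ ≤ ∫⁻ x in s, g x ∂μ := setLIntegral_mono' hs hg
    _ ≤ ∫⁻ x, g x ∂μ := setLIntegral_le_lintegral _ _

theorem stmt2_general (n m : ℕ) (hn : 0 < n) (lam p q : ℝ)
    (hlam0 : 0 < lam) (hq : 0 < q)
    (D : Matrix (Fin n) (Fin m) ℝ) (hrank : D.rank < m)
    (f : E n → ℝ) (hf : MemLp f (ENNReal.ofReal p) volume)
    (hpos : ∀ y, 0 ≤ f y) (hne : ¬ f =ᵐ[volume] 0) :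
    ∫⁻ x : E m, (∫⁻ y : E n, ENNReal.ofReal (f y) *
        ENNReal.ofReal (‖mvec D x - y‖ ^ (-lam)) ∂volume) ^ q ∂volume = ⊤ := by
  have : Nonempty (Fin n) := ⟨⟨0, hn⟩⟩
  have hF : ∫⁻ y, ENNReal.ofReal (f y) ≠ 0 := by
    rw [Ne, lintegral_eq_zero_iff' hf.1.aemeasurable.ennreal_ofReal]
    refine fun h => hne ?_
    filter_upwards [h] with y hy
    exact le_antisymm (ENNReal.ofReal_eq_zero.1 hy) (hpos y)
  obtain ⟨ε, hε, hT⟩ := exists_ne_zero_le_lintegral_mul_rpow_norm_sub hF hlam0.le one_pos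
  obtain ⟨v, hv, hDv⟩ :=
    D.exists_ne_zero_mulVec_eq_zero_of_rank_lt (by rwa [Fintype.card_fin])
  let L : E m →L[ℝ] E n := LinearMap.toContinuousLinearMap (toEuclideanLin D)
  have hS : volume (L ⁻¹' closedBall 0 1) = ⊤ :=
    L.measure_preimage_eq_top_of_apply_eq_zero volume (v := WithLp.toLp 2 v) (by simpa)
      (by simp [L, hDv]) (closedBall_mem_nhds 0 one_pos)
  exact lintegral_eq_top_of_le_on_measure_eq_top (measurableSet_closedBall.preimage L.measurable)
    hS (ENNReal.rpow_pos_of_nonneg (pos_iff_ne_zero.2 hε) hq.le).ne'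
    fun x hx => ENNReal.rpow_le_rpow (hT (L x) (mem_closedBall_zero_iff.1 hx)) hq.le

/-- If `rank D < m`, `0 < λ < n`, `1 < p < ∞`, and `f ∈ L^p(ℝ^n)` is nonnegative and not
a.e. zero, then `x ↦ ∫ f(y)/|Dx − y|^λ dy` is not in `L^q(ℝ^m)` for any `0 < q < ∞`. -/
theorem stmt2 (n m : ℕ) (hn : 0 < n) (hm : 0 < m) (lam p q : ℝ)
    (hlam0 : 0 < lam) (hlamn : lam < n) (hp : 1 < p) (hq : 0 < q)
    (D : Matrix (Fin n) (Fin m) ℝ) (hrank : D.rank < m)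
    (f : E n → ℝ) (hf : MemLp f (ENNReal.ofReal p) volume)
    (hpos : ∀ y, 0 ≤ f y) (hne : ¬ f =ᵐ[volume] 0) :
    ∫⁻ x : E m, (∫⁻ y : E n, ENNReal.ofReal (f y) *
        ENNReal.ofReal (‖mvec D x - y‖ ^ (-lam)) ∂volume) ^ q ∂volume = ⊤ :=
  stmt2_general n m hn lam p q hlam0 hq D hrank f hf hpos hne
end

section
/- Let n, m be positive integers, λ > 0, 0 < p, q ≤ ∞. If ‖∫_{ℝ^n} f(y)(|x| + |y|)^{−λ} dy‖_{L_x^q(ℝ^m)} ≲ ‖f‖_{L^p(ℝ^n)} holds for all f ∈ L^p, then λ = n/p' + m/q and 1 < p ≤ q < ∞. -/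
/-!
Write `T f (x) = ∫ |f y| (‖x‖ + ‖y‖)^(-λ) dy` and `s = 1/p`, `σ = 1/q`. Testing the bound on
indicators of balls `B(0, r)` gives `r^(-λ + n + mσ) ≲ r^(ns)` for all `r > 0`, which forces
`λ = n(1 - s) + mσ`. The remaining conditions fail for explicit functions with too large potentials:
* if `p ≤ 1`, then `λq ≤ m`, and `T 1_{B(0,1)} (x) ≳ (1 + ‖x‖)^(-λ)` is not in `L^q`;
* if `q = ∞`, then `f(y) = ‖y‖^(-ns) (log ‖y‖)^(-1)` (cut off at `‖y‖ = 2`) is in `L^p` since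
  `p > 1`, but `T f = ∞` on `B(0, 2)`;
* if `q < p`, then `f(y) = ‖y‖^(-ns) (log ‖y‖)^(-σ)` is in `L^p`, while
  `T f (x) ≳ ‖x‖^(-mσ) (log ‖x‖)^(-σ)` for `‖x‖ > 2`, whose `q`-th power is not integrable.
-/

open MeasureTheory ENNReal

/-- The `L^q(ℝ^m)` norm (with exponent `q ∈ (0,∞]`) of an `ℝ≥0∞`-valued function. -/
noncomputable def qnorm {α : Type*} [MeasurableSpace α] (μ : Measure α) (q : ℝ≥0∞)
    (F : α → ℝ≥0∞) : ℝ≥0∞ :=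
  if q = 0 then 0 else if q = ⊤ then essSup F μ
  else (∫⁻ x, F x ^ q.toReal ∂μ) ^ (1 / q.toReal)

open Set Metric Module

lemma lintegral_Ioi_ofReal_rpow_lt_top_iff {a s : ℝ} (ha : 0 < a) :
    ∫⁻ r in Ioi a, ENNReal.ofReal (r ^ s) < ⊤ ↔ s < -1 := by
  have hnonneg : 0 ≤ᵐ[volume.restrict (Ioi a)] fun r : ℝ => r ^ s :=
    (ae_restrict_iff' measurableSet_Ioi).2
      (ae_of_all _ fun r hr => Real.rpow_nonneg (ha.trans hr).le s)
  rw [← hasFiniteIntegral_iff_ofReal hnonneg, ← integrableOn_Ioi_rpow_iff ha, IntegrableOn,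
    Integrable, and_iff_right (by fun_prop)]

/-- Substituting `r = exp u` turns the integral into `∫_{log 2}^∞ u ^ (-b) du`. -/
lemma lintegral_Ioi_two_rpow_neg_one_mul_log_rpow_lt_top_iff (b : ℝ) :
    ∫⁻ r in Ioi 2, ENNReal.ofReal (r ^ (-1 : ℝ) * Real.log r ^ (-b)) < ⊤ ↔ 1 < b := by
  have himage : Real.exp '' Ioi (Real.log 2) = Ioi 2 := by
    rw [Real.image_exp_Ioi, Real.exp_log two_pos]
  rw [← himage, lintegral_image_eq_lintegral_abs_deriv_mul measurableSet_Ioi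
      (fun u _ => (Real.hasDerivAt_exp u).hasDerivWithinAt) Real.exp_injective.injOn,
    setLIntegral_congr_fun measurableSet_Ioi (g := fun u => ENNReal.ofReal (u ^ (-b))) ?_,
    lintegral_Ioi_ofReal_rpow_lt_top_iff (Real.log_pos one_lt_two)]
  · constructor <;> intro h <;> linarith
  · intro u _
    dsimp only
    rw [← ENNReal.ofReal_mul (abs_nonneg _), Real.log_exp, abs_of_pos (Real.exp_pos u),
      ← mul_assoc, Real.rpow_neg_one, mul_inv_cancel₀ (Real.exp_pos u).ne', one_mul]

lemma ofReal_rpow_mul_log_rpow_le_lintegral_Ioi {u a R : ℝ} (hu : 0 ≤ u) (ha : 0 ≤ a)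
    (hR : 2 ≤ R) :
    ENNReal.ofReal (2 ^ (-1 - u - a) * R ^ (-u) * Real.log R ^ (-a)) ≤
      ∫⁻ r in Ioi R, ENNReal.ofReal (r ^ (-1 - u) * Real.log r ^ (-a)) := by
  have hR0 : 0 < R := by linarith
  have hlogR : 0 < Real.log R := Real.log_pos (by linarith)
  have hlog2R : Real.log (2 * R) ≤ 2 * Real.log R := by
    rw [Real.log_mul two_ne_zero hR0.ne']
    linarith [Real.log_le_log two_pos hR]
  -- on `(R, 2R]`, an interval of length `R`, the integrand is at least `(2R)^(-1-u) (2 log R)^(-a)`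
  have hvalue : 2 ^ (-1 - u - a) * R ^ (-u) * Real.log R ^ (-a) =
      (2 * R) ^ (-1 - u) * (2 * Real.log R) ^ (-a) * (2 * R - R) := by
    rw [Real.mul_rpow zero_le_two hR0.le, Real.mul_rpow zero_le_two hlogR.le,
      show -1 - u - a = (-1 - u) + -a by ring, Real.rpow_add two_pos,
      show -u = (-1 - u) + 1 by ring, Real.rpow_add hR0, Real.rpow_one]
    ring
  calc ENNReal.ofReal (2 ^ (-1 - u - a) * R ^ (-u) * Real.log R ^ (-a))
      = ∫⁻ _ in Ioc R (2 * R), ENNReal.ofReal ((2 * R) ^ (-1 - u) * (2 * Real.log R) ^ (-a)) := by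
        rw [setLIntegral_const, Real.volume_Ioc, ← ENNReal.ofReal_mul (by positivity), hvalue]
    _ ≤ ∫⁻ r in Ioc R (2 * R), ENNReal.ofReal (r ^ (-1 - u) * Real.log r ^ (-a)) := by
        refine setLIntegral_mono' measurableSet_Ioc fun r hr => ENNReal.ofReal_le_ofReal ?_
        have hr0 : 0 < r := hR0.trans hr.1
        have hlogr : 0 < Real.log r := Real.log_pos (by linarith [hr.1])
        gcongr ?_ * ?_
        · exact Real.rpow_le_rpow_of_nonpos hr0 hr.2 (by linarith)
        · exact Real.rpow_le_rpow_of_nonpos hlogr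
            ((Real.log_le_log hr0 hr.2).trans hlog2R) (by linarith)
    _ ≤ _ := lintegral_mono_set Ioc_subset_Ioi_self

/-- The operator of the theorem, as a function of `‖x‖`. -/
noncomputable def potential {F : Type*} [Norm F] [MeasurableSpace F] (μ : Measure F) (lam : ℝ)
    (f : F → ℝ) (w : ℝ) : ℝ≥0∞ :=
  ∫⁻ y, ENNReal.ofReal |f y| * ENNReal.ofReal ((w + ‖y‖) ^ (-lam)) ∂μ

noncomputable def logDecay (c a : ℝ) : ℝ → ℝ :=
  (Ioi 2).indicator fun r => r ^ (-c) * Real.log r ^ (-a)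

lemma logDecay_of_two_lt {c a r : ℝ} (hr : 2 < r) :
    logDecay c a r = r ^ (-c) * Real.log r ^ (-a) :=
  indicator_of_mem hr _

lemma logDecay_nonneg (c a r : ℝ) : 0 ≤ logDecay c a r := by
  refine indicator_nonneg (fun r (hr : 2 < r) => ?_) r
  have : 0 < Real.log r := Real.log_pos (by linarith)
  positivity

lemma measurable_logDecay (c a : ℝ) : Measurable (logDecay c a) :=
  Measurable.indicator (by fun_prop) measurableSet_Ioi

section Radial

variable {F : Type*} [NormedAddCommGroup F] [NormedSpace ℝ F] [FiniteDimensional ℝ F]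
  [MeasurableSpace F] [BorelSpace F] [Nontrivial F] (μ : Measure F) [μ.IsAddHaarMeasure]

lemma lintegral_comp_norm (g : ℝ → ℝ≥0∞) (hg : Measurable g) :
    ∫⁻ x, g ‖x‖ ∂μ = finrank ℝ F * μ (ball 0 1) *
      ∫⁻ r in Ioi (0 : ℝ), ENNReal.ofReal (r ^ ((finrank ℝ F : ℝ) - 1)) * g r := by
  have hg' : Measurable fun z : sphere (0 : F) 1 × Ioi (0 : ℝ) => g z.2 := by fun_prop
  calc ∫⁻ x, g ‖x‖ ∂μ
      = ∫⁻ x : ({0}ᶜ : Set F), g ‖(x : F)‖ ∂μ.comap (↑) := by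
        rw [lintegral_subtype_comap (measurableSet_singleton _).compl fun x => g ‖x‖,
          restrict_compl_singleton]
    _ = ∫⁻ z : sphere (0 : F) 1 × Ioi (0 : ℝ), g z.2
          ∂μ.toSphere.prod (Measure.volumeIoiPow (finrank ℝ F - 1)) := by
        simpa using μ.measurePreserving_homeomorphUnitSphereProd.lintegral_comp hg'
    _ = μ.toSphere univ * ∫⁻ r : Ioi (0 : ℝ), g r ∂Measure.volumeIoiPow (finrank ℝ F - 1) := by
        rw [lintegral_prod _ hg'.aemeasurable]
        simp [lintegral_const, mul_comm]
    _ = _ := by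
        rw [Measure.toSphere_apply_univ, Measure.volumeIoiPow,
          lintegral_withDensity_eq_lintegral_mul _ (by fun_prop) (by fun_prop),
          ← lintegral_subtype_comap measurableSet_Ioi
            (fun r => ENNReal.ofReal (r ^ ((finrank ℝ F : ℝ) - 1)) * g r)]
        congr 2 with r
        have hd : ((finrank ℝ F - 1 : ℕ) : ℝ) = (finrank ℝ F : ℝ) - 1 := by
          rw [Nat.cast_sub finrank_pos, Nat.cast_one]
        simp [← hd, Real.rpow_natCast]

lemma lintegral_indicator_Ioi_comp_norm {R : ℝ} (hR : 0 ≤ R) (g : ℝ → ℝ≥0∞)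
    (hg : Measurable g) :
    ∫⁻ x, (Ioi R).indicator g ‖x‖ ∂μ = finrank ℝ F * μ (ball 0 1) *
      ∫⁻ r in Ioi R, ENNReal.ofReal (r ^ ((finrank ℝ F : ℝ) - 1)) * g r := by
  rw [lintegral_comp_norm μ _ (hg.indicator measurableSet_Ioi)]
  simp_rw [← indicator_mul_right (Ioi R) (fun r => ENNReal.ofReal (r ^ ((finrank ℝ F : ℝ) - 1)))]
  rw [setLIntegral_indicator measurableSet_Ioi, Ioi_inter_Ioi, max_eq_left hR]

lemma lintegral_indicator_Ioi_two_norm_rpow_log_lt_top_iff (b : ℝ) :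
    ∫⁻ x, (Ioi 2).indicator
        (fun r => ENNReal.ofReal (r ^ (-(finrank ℝ F : ℝ)) * Real.log r ^ (-b))) ‖x‖ ∂μ < ⊤ ↔
      1 < b := by
  have hconst : (finrank ℝ F : ℝ≥0∞) * μ (ball 0 1) ≠ 0 :=
    mul_ne_zero (Nat.cast_ne_zero.2 finrank_pos.ne') (measure_ball_pos μ 0 one_pos).ne'
  have hconst' : (finrank ℝ F : ℝ≥0∞) * μ (ball 0 1) ≠ ⊤ :=
    mul_ne_top (natCast_ne_top _) measure_ball_lt_top.ne
  have hintegrand : EqOn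
      (fun r => ENNReal.ofReal (r ^ ((finrank ℝ F : ℝ) - 1)) *
        ENNReal.ofReal (r ^ (-(finrank ℝ F : ℝ)) * Real.log r ^ (-b)))
      (fun r => ENNReal.ofReal (r ^ (-1 : ℝ) * Real.log r ^ (-b))) (Ioi 2) := by
    intro r (hr : 2 < r)
    have hr0 : 0 < r := two_pos.trans hr
    dsimp only
    rw [← ENNReal.ofReal_mul (by positivity), ← mul_assoc, ← Real.rpow_add hr0]
    ring_nf
  rw [lintegral_indicator_Ioi_comp_norm μ zero_le_two _ (by fun_prop),
    setLIntegral_congr_fun measurableSet_Ioi hintegrand,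
    ← lintegral_Ioi_two_rpow_neg_one_mul_log_rpow_lt_top_iff b]
  simp [lt_top_iff_ne_top, ENNReal.mul_eq_top, hconst, hconst']

lemma lintegral_one_add_norm_rpow_neg_eq_top {t : ℝ} (ht0 : 0 ≤ t) (ht : t ≤ finrank ℝ F) :
    ∫⁻ x, ENNReal.ofReal ((1 + ‖x‖) ^ (-t)) ∂μ = ⊤ := by
  have hlower : ∀ x : F,
      (Ioi 1).indicator (fun r => ENNReal.ofReal (2 ^ (-t)) * ENNReal.ofReal (r ^ (-t))) ‖x‖ ≤
        ENNReal.ofReal ((1 + ‖x‖) ^ (-t)) := by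
    intro x
    by_cases hx : ‖x‖ ∈ Ioi 1
    · have hx1 : 1 < ‖x‖ := hx
      rw [indicator_of_mem hx, ← ENNReal.ofReal_mul (by positivity),
        ← Real.mul_rpow zero_le_two (norm_nonneg x)]
      exact ENNReal.ofReal_le_ofReal
        (Real.rpow_le_rpow_of_nonpos (by positivity) (by linarith) (by linarith))
    · rw [indicator_of_notMem hx]
      exact zero_le
  have hintegrand : EqOn
      (fun r => ENNReal.ofReal (r ^ ((finrank ℝ F : ℝ) - 1)) *
        (ENNReal.ofReal (2 ^ (-t)) * ENNReal.ofReal (r ^ (-t))))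
      (fun r => ENNReal.ofReal (2 ^ (-t)) * ENNReal.ofReal (r ^ ((finrank ℝ F : ℝ) - 1 - t)))
      (Ioi 1) := by
    intro r (hr : 1 < r)
    have hr0 : 0 < r := one_pos.trans hr
    dsimp only
    rw [mul_left_comm, ← ENNReal.ofReal_mul (by positivity), ← Real.rpow_add hr0]
    ring_nf
  have hdiv : ∫⁻ r in Ioi (1 : ℝ), ENNReal.ofReal (r ^ ((finrank ℝ F : ℝ) - 1 - t)) = ⊤ :=
    not_lt_top_iff.1 fun h => by linarith [(lintegral_Ioi_ofReal_rpow_lt_top_iff one_pos).1 h]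
  refine top_le_iff.1 (le_trans ?_ (lintegral_mono hlower))
  rw [lintegral_indicator_Ioi_comp_norm μ zero_le_one _ (by fun_prop),
    setLIntegral_congr_fun measurableSet_Ioi hintegrand, lintegral_const_mul _ (by fun_prop), hdiv,
    ENNReal.mul_top (ENNReal.ofReal_pos.2 (by positivity)).ne',
    ENNReal.mul_top (mul_ne_zero (Nat.cast_ne_zero.2 finrank_pos.ne')
      (measure_ball_pos μ 0 one_pos).ne')]

lemma addHaar_ball_rpow {r t : ℝ} (hr : 0 ≤ r) (ht : 0 ≤ t) :
    μ (ball 0 r) ^ t = ENNReal.ofReal (r ^ (finrank ℝ F * t)) * μ (ball 0 1) ^ t := by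
  rw [Measure.addHaar_ball μ 0 hr, mul_rpow_of_nonneg _ _ ht,
    ofReal_rpow_of_nonneg (by positivity) ht, ← Real.rpow_natCast, ← Real.rpow_mul hr]

lemma ofReal_rpow_neg_mul_measure_ball_le_potential {lam r w b : ℝ} (hlam : 0 ≤ lam)
    (hw : 0 ≤ w) (hb : w + r ≤ b) :
    ENNReal.ofReal (b ^ (-lam)) * μ (ball 0 r) ≤
      potential μ lam ((ball (0 : F) r).indicator fun _ => 1) w := by
  rw [← lintegral_indicator_const measurableSet_ball]
  refine lintegral_mono_ae ((Measure.ae_ne μ 0).mono fun y hy0 => ?_)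
  by_cases hyr : y ∈ ball (0 : F) r
  · have hy : ‖y‖ < r := mem_ball_zero_iff.1 hyr
    rw [indicator_of_mem hyr, indicator_of_mem hyr, abs_one, ENNReal.ofReal_one, one_mul]
    exact ENNReal.ofReal_le_ofReal (Real.rpow_le_rpow_of_nonpos
      (by positivity [norm_pos_iff.2 hy0]) (by linarith) (neg_nonpos.2 hlam))
  · rw [indicator_of_notMem hyr]
    exact zero_le

lemma memLp_logDecay {p : ℝ≥0∞} (hp : p ≠ 0) {a : ℝ} (ha0 : 0 ≤ a)
    (ha : p ≠ ⊤ → 1 < a * p.toReal) :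
    MemLp (fun y : F => logDecay (finrank ℝ F * (1 / p).toReal) a ‖y‖) p μ := by
  have hmeas : Measurable fun y : F => logDecay (finrank ℝ F * (1 / p).toReal) a ‖y‖ :=
    (measurable_logDecay _ _).comp measurable_norm
  rcases eq_or_ne p ⊤ with rfl | hpt
  · refine memLp_top_of_bound hmeas.aestronglyMeasurable (Real.log 2 ^ (-a))
      (ae_of_all _ fun y => ?_)
    rw [Real.norm_of_nonneg (logDecay_nonneg _ _ _)]
    by_cases hy : ‖y‖ ∈ Ioi 2
    · rw [logDecay_of_two_lt hy]
      simp only [div_top, toReal_zero, mul_zero, neg_zero, Real.rpow_zero, one_mul]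
      exact Real.rpow_le_rpow_of_nonpos (Real.log_pos one_lt_two)
        (Real.log_le_log two_pos hy.le) (neg_nonpos.2 ha0)
    · rw [logDecay, indicator_of_notMem hy]
      positivity
  have hp' : 0 < p.toReal := toReal_pos hp hpt
  refine ⟨hmeas.aestronglyMeasurable, (eLpNorm_lt_top_iff_lintegral_rpow_enorm_lt_top hp hpt).2 ?_⟩
  have hpow : ∀ y : F, ‖logDecay (finrank ℝ F * (1 / p).toReal) a ‖y‖‖ₑ ^ p.toReal =
      (Ioi 2).indicator (fun r => ENNReal.ofReal
        (r ^ (-(finrank ℝ F : ℝ)) * Real.log r ^ (-(a * p.toReal)))) ‖y‖ := by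
    intro y
    by_cases hy : ‖y‖ ∈ Ioi 2
    · have hy2 : 2 < ‖y‖ := hy
      have hy0 : 0 < ‖y‖ := two_pos.trans hy2
      have hlog : 0 < Real.log ‖y‖ := Real.log_pos (by linarith)
      rw [indicator_of_mem hy, logDecay_of_two_lt hy, Real.enorm_of_nonneg (by positivity),
        ENNReal.ofReal_rpow_of_nonneg (by positivity) hp'.le,
        Real.mul_rpow (by positivity) (by positivity), ← Real.rpow_mul hy0.le,
        ← Real.rpow_mul hlog.le, one_div, toReal_inv]
      field_simp
    · rw [logDecay, indicator_of_notMem hy, indicator_of_notMem hy, enorm_zero,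
        ENNReal.zero_rpow_of_pos hp']
  simp_rw [hpow]
  exact (lintegral_indicator_Ioi_two_norm_rpow_log_lt_top_iff μ _).2 (ha hpt)

lemma exists_mul_lintegral_le_potential_logDecay {lam : ℝ} (hlam : 0 ≤ lam) (c a : ℝ) :
    ∃ K : ℝ≥0∞, K ≠ 0 ∧ ∀ w, 0 ≤ w →
      K * ∫⁻ r in Ioi (max 2 w),
          ENNReal.ofReal (r ^ ((finrank ℝ F : ℝ) - 1 - c - lam) * Real.log r ^ (-a)) ≤
        potential μ lam (fun y : F => logDecay c a ‖y‖) w := by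
  refine ⟨finrank ℝ F * μ (ball 0 1) * ENNReal.ofReal (2 ^ (-lam)),
    mul_ne_zero (mul_ne_zero (Nat.cast_ne_zero.2 finrank_pos.ne')
      (measure_ball_pos μ 0 one_pos).ne') (ENNReal.ofReal_pos.2 (by positivity)).ne',
    fun w hw => ?_⟩
  set R := max 2 w
  have hR2 : 2 ≤ R := le_max_left 2 w
  -- for `‖y‖ > R ≥ w`, the kernel `(w + ‖y‖)^(-lam)` is at least `(2‖y‖)^(-lam)`
  have hlower : ∀ y : F, (Ioi R).indicator (fun r => ENNReal.ofReal (2 ^ (-lam)) *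
      ENNReal.ofReal (r ^ (-c - lam) * Real.log r ^ (-a))) ‖y‖ ≤
        ENNReal.ofReal |logDecay c a ‖y‖| * ENNReal.ofReal ((w + ‖y‖) ^ (-lam)) := by
    intro y
    by_cases hy : ‖y‖ ∈ Ioi R
    · have hy2 : 2 < ‖y‖ := hR2.trans_lt hy
      have hy0 : 0 < ‖y‖ := two_pos.trans hy2
      have hlog : 0 < Real.log ‖y‖ := Real.log_pos (by linarith)
      have hkernel : (2 * ‖y‖) ^ (-lam) ≤ (w + ‖y‖) ^ (-lam) :=
        Real.rpow_le_rpow_of_nonpos (by positivity)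
          (by linarith [(le_max_right 2 w).trans (le_of_lt hy)]) (neg_nonpos.2 hlam)
      rw [indicator_of_mem hy, logDecay_of_two_lt hy2, abs_of_nonneg (by positivity),
        ← ENNReal.ofReal_mul (by positivity), ← ENNReal.ofReal_mul (by positivity)]
      refine ENNReal.ofReal_le_ofReal (le_of_eq_of_le ?_
        (mul_le_mul_of_nonneg_left hkernel (by positivity)))
      rw [Real.mul_rpow zero_le_two hy0.le, sub_eq_add_neg, Real.rpow_add hy0]
      ring
    · rw [indicator_of_notMem hy]
      exact zero_le
  have hintegrand : EqOn
      (fun r => ENNReal.ofReal (r ^ ((finrank ℝ F : ℝ) - 1)) * (ENNReal.ofReal (2 ^ (-lam)) *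
        ENNReal.ofReal (r ^ (-c - lam) * Real.log r ^ (-a))))
      (fun r => ENNReal.ofReal (2 ^ (-lam)) *
        ENNReal.ofReal (r ^ ((finrank ℝ F : ℝ) - 1 - c - lam) * Real.log r ^ (-a))) (Ioi R) := by
    intro r (hr : R < r)
    have hr0 : 0 < r := by linarith
    dsimp only
    rw [mul_left_comm, ← ENNReal.ofReal_mul (by positivity), ← mul_assoc, ← Real.rpow_add hr0]
    ring_nf
  refine le_trans (le_of_eq ?_) (lintegral_mono hlower)
  rw [lintegral_indicator_Ioi_comp_norm μ (by positivity) _ (by fun_prop),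
    setLIntegral_congr_fun measurableSet_Ioi hintegrand, lintegral_const_mul _ (by fun_prop)]
  ring

end Radial

section Qnorm

variable {α : Type*} [MeasurableSpace α] (μ : Measure α) {q : ℝ≥0∞} {F : α → ℝ≥0∞}

lemma le_qnorm_of_forall_le (hq : q ≠ 0) {s : Set α} {c : ℝ≥0∞} (hs : MeasurableSet s)
    (hμs : μ s ≠ 0) (h : ∀ x ∈ s, c ≤ F x) : c * μ s ^ (1 / q).toReal ≤ qnorm μ q F := by
  rw [qnorm, if_neg hq]
  split_ifs with hqt
  · subst hqt
    rw [div_top, toReal_zero, rpow_zero, mul_one]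
    exact not_lt.1 fun hlt => hμs (measure_mono_null (fun x hx => (h x hx).not_gt)
      (ae_iff.1 (ae_lt_of_essSup_lt hlt)))
  · have hq' : 0 < q.toReal := toReal_pos hq hqt
    calc c * μ s ^ (1 / q).toReal = (∫⁻ _ in s, c ^ q.toReal ∂μ) ^ (1 / q.toReal) := by
          rw [setLIntegral_const, mul_rpow_of_nonneg _ _ (by positivity), ← rpow_mul,
            mul_one_div_cancel hq'.ne', rpow_one, one_div, toReal_inv, one_div]
      _ ≤ (∫⁻ x, F x ^ q.toReal ∂μ) ^ (1 / q.toReal) := by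
          refine rpow_le_rpow ((setLIntegral_mono' hs fun x hx => ?_).trans
            (setLIntegral_le_lintegral _ _)) (by positivity)
          exact rpow_le_rpow (h x hx) hq'.le

lemma qnorm_eq_top_of_forall_le (hq : q ≠ 0) (hqt : q ≠ ⊤) {g : α → ℝ≥0∞} {k : ℝ≥0∞} (hk : k ≠ 0)
    (hg : ∫⁻ x, g x ∂μ = ⊤) (h : ∀ x, k * g x ^ (1 / q).toReal ≤ F x) : qnorm μ q F = ⊤ := by
  have hq' : 0 < q.toReal := toReal_pos hq hqt
  have hpow : ∀ x, k ^ q.toReal * g x ≤ F x ^ q.toReal := fun x => by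
    calc k ^ q.toReal * g x = (k * g x ^ (1 / q).toReal) ^ q.toReal := by
          rw [mul_rpow_of_nonneg _ _ hq'.le, ← rpow_mul, one_div, toReal_inv,
            inv_mul_cancel₀ hq'.ne', rpow_one]
      _ ≤ F x ^ q.toReal := by gcongr; exact h x
  have hint : ∫⁻ x, F x ^ q.toReal ∂μ = ⊤ := by
    refine top_le_iff.1 (le_trans ?_ (lintegral_mono hpow))
    rw [← ENNReal.mul_top (rpow_pos_of_nonneg (pos_iff_ne_zero.2 hk) hq'.le).ne', ← hg]
    exact lintegral_const_mul_le _ _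
  rw [qnorm, if_neg hq, if_neg hqt, hint, top_rpow_of_pos (by positivity)]

end Qnorm

lemma eq_of_forall_mul_rpow_le {a b α β : ℝ} (ha : 0 < a)
    (h : ∀ r : ℝ, 0 < r → a * r ^ α ≤ b * r ^ β) : α = β := by
  have hb : 0 < b := ha.trans_le (by simpa using h 1 one_pos)
  by_contra hne
  -- at `r` with `r ^ (β - α) = a / (2b)` the inequality would read `a ≤ a / 2`
  set r := (a / (2 * b)) ^ (β - α)⁻¹
  have hr : 0 < r := by positivity
  have hrpow : r ^ (β - α) = a / (2 * b) := by
    rw [← Real.rpow_mul (by positivity), inv_mul_cancel₀ (sub_ne_zero.2 (Ne.symm hne)),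
      Real.rpow_one]
  have hle := h r hr
  rw [show β = α + (β - α) by ring, Real.rpow_add hr, hrpow] at hle
  have hrα : 0 < r ^ α := by positivity
  field_simp at hle
  nlinarith

lemma ENNReal.eq_of_forall_mul_ofReal_rpow_le {a b : ℝ≥0∞} (ha : a ≠ 0) (ha' : a ≠ ⊤)
    (hb : b ≠ ⊤) {α β : ℝ}
    (h : ∀ r : ℝ, 0 < r → a * ENNReal.ofReal (r ^ α) ≤ b * ENNReal.ofReal (r ^ β)) : α = β := by
  refine eq_of_forall_mul_rpow_le (a := a.toReal) (b := b.toReal) (toReal_pos ha ha')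
    fun r hr => ?_
  have := toReal_mono (mul_ne_top hb ofReal_ne_top) (h r hr)
  rwa [toReal_mul, toReal_mul, toReal_ofReal (by positivity), toReal_ofReal (by positivity)]
    at this

def PotentialBound {F G : Type*} [Norm F] [MeasurableSpace F] [Norm G] [MeasurableSpace G]
    (μ : Measure F) (ν : Measure G) (lam : ℝ) (p q : ℝ≥0∞) (C : ℝ) : Prop :=
  ∀ f : F → ℝ, MemLp f p μ →
    qnorm ν q (fun x => potential μ lam f ‖x‖) ≤ ENNReal.ofReal C * eLpNorm f p μ

lemma PotentialBound.qnorm_ne_top {F G : Type*} [Norm F] [MeasurableSpace F] [Norm G]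
    [MeasurableSpace G] {μ : Measure F} {ν : Measure G} {lam : ℝ} {p q : ℝ≥0∞} {C : ℝ}
    (h : PotentialBound μ ν lam p q C) {f : F → ℝ} (hf : MemLp f p μ) :
    qnorm ν q (fun x => potential μ lam f ‖x‖) ≠ ⊤ :=
  ((h f hf).trans_lt (mul_lt_top ofReal_lt_top hf.eLpNorm_lt_top)).ne

namespace PotentialBound

variable {F G : Type*}
  [NormedAddCommGroup F] [NormedSpace ℝ F] [FiniteDimensional ℝ F] [MeasurableSpace F]
  [BorelSpace F] [Nontrivial F] {μ : Measure F} [μ.IsAddHaarMeasure]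
  [NormedAddCommGroup G] [NormedSpace ℝ G] [MeasurableSpace G] [BorelSpace G] {ν : Measure G}
  {lam : ℝ} {p q : ℝ≥0∞} {C : ℝ}

section

variable [FiniteDimensional ℝ G] [Nontrivial G] [ν.IsAddHaarMeasure]

theorem exponent_eq (h : PotentialBound μ ν lam p q C) (hlam : 0 ≤ lam) (hq : q ≠ 0) :
    lam = finrank ℝ F * (1 - (1 / p).toReal) + finrank ℝ G * (1 / q).toReal := by
  set d : ℝ := (finrank ℝ F : ℝ)
  set s := (1 / p).toReal
  set σ := (1 / q).toReal
  have hs : 0 ≤ s := toReal_nonneg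
  have hσ : 0 ≤ σ := toReal_nonneg
  have key : ∀ r : ℝ, 0 < r →
      ENNReal.ofReal (2 ^ (-lam)) * μ (ball 0 1) * ν (ball 0 1) ^ σ *
          ENNReal.ofReal (r ^ (-lam + d + finrank ℝ G * σ)) ≤
        ENNReal.ofReal C * μ (ball 0 1) ^ s * ENNReal.ofReal (r ^ (d * s)) := by
    intro r hr
    have hsplit : ENNReal.ofReal (r ^ (-lam + d + finrank ℝ G * σ)) =
        ENNReal.ofReal (r ^ (-lam)) * ENNReal.ofReal (r ^ d) *
          ENNReal.ofReal (r ^ (finrank ℝ G * σ)) := by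
      rw [← ENNReal.ofReal_mul (by positivity), ← ENNReal.ofReal_mul (by positivity),
        ← Real.rpow_add hr, ← Real.rpow_add hr]
    calc _ = ENNReal.ofReal ((2 * r) ^ (-lam)) * μ (ball 0 r) * ν (ball 0 r) ^ σ := by
          rw [Real.mul_rpow zero_le_two hr.le, ENNReal.ofReal_mul (by positivity),
            Measure.addHaar_ball μ 0 hr.le, addHaar_ball_rpow ν hr.le hσ, ← Real.rpow_natCast,
            hsplit]
          ring
      _ ≤ qnorm ν q (fun x => potential μ lam ((ball (0 : F) r).indicator fun _ => 1) ‖x‖) :=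
          le_qnorm_of_forall_le ν hq measurableSet_ball (measure_ball_pos ν 0 hr).ne'
            fun x hx => ofReal_rpow_neg_mul_measure_ball_le_potential μ hlam (norm_nonneg x)
              (by linarith [mem_ball_zero_iff.1 hx])
      _ ≤ ENNReal.ofReal C * eLpNorm ((ball (0 : F) r).indicator fun _ => (1 : ℝ)) p μ :=
          h _ (memLp_indicator_const p measurableSet_ball _ (Or.inr measure_ball_lt_top.ne))
      _ ≤ ENNReal.ofReal C * μ (ball 0 r) ^ s := by
          gcongr
          refine (eLpNorm_indicator_const_le _ _).trans ?_
          rw [enorm_one, one_mul, one_div, ← toReal_inv, ← one_div]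
      _ = _ := by
          rw [addHaar_ball_rpow μ hr.le hs]
          ring
  have hexp := ENNReal.eq_of_forall_mul_ofReal_rpow_le ?_ ?_ ?_ key
  · linarith
  · exact mul_ne_zero (mul_ne_zero (ENNReal.ofReal_pos.2 (by positivity)).ne'
      (measure_ball_pos μ 0 one_pos).ne') (rpow_pos_of_nonneg (measure_ball_pos ν 0 one_pos) hσ).ne'
  · exact mul_ne_top (mul_ne_top ofReal_ne_top measure_ball_lt_top.ne)
      (rpow_ne_top_of_nonneg hσ measure_ball_lt_top.ne)
  · exact mul_ne_top ofReal_ne_top (rpow_ne_top_of_nonneg hs measure_ball_lt_top.ne)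

theorem one_lt (h : PotentialBound μ ν lam p q C) (hp : p ≠ 0) (hq : q ≠ 0) (hlam : 0 < lam)
    (hexp : lam = finrank ℝ F * (1 - (1 / p).toReal) + finrank ℝ G * (1 / q).toReal) :
    1 < p := by
  by_contra hp1
  have hs : 1 ≤ (1 / p).toReal := by
    rw [one_div, ← toReal_one]
    exact toReal_mono (inv_ne_top.2 hp) (ENNReal.one_le_inv.2 (not_lt.1 hp1))
  have hlam_le : lam ≤ finrank ℝ G * (1 / q).toReal := by
    linarith [mul_nonpos_of_nonneg_of_nonpos (Nat.cast_nonneg (finrank ℝ F) : (0 : ℝ) ≤ _)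
      (sub_nonpos.2 hs)]
  have hqt : q ≠ ⊤ := by
    rintro rfl
    simp only [div_top, toReal_zero, mul_zero] at hlam_le
    linarith
  have hq' : 0 < q.toReal := toReal_pos hq hqt
  have hσq : (1 / q).toReal * q.toReal = 1 := by
    rw [one_div, toReal_inv, inv_mul_cancel₀ hq'.ne']
  have ht : lam * q.toReal ≤ finrank ℝ G := by
    nlinarith
  refine h.qnorm_ne_top (f := (ball (0 : F) 1).indicator fun _ => 1)
    (memLp_indicator_const p measurableSet_ball _ (Or.inr measure_ball_lt_top.ne))
    (qnorm_eq_top_of_forall_le ν hq hqt (measure_ball_pos μ 0 one_pos).ne'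
      (lintegral_one_add_norm_rpow_neg_eq_top ν (by positivity) ht) fun x => ?_)
  calc μ (ball 0 1) * ENNReal.ofReal ((1 + ‖x‖) ^ (-(lam * q.toReal))) ^ (1 / q).toReal
      = ENNReal.ofReal ((1 + ‖x‖) ^ (-lam)) * μ (ball 0 1) := by
        rw [ofReal_rpow_of_nonneg (by positivity) toReal_nonneg, ← Real.rpow_mul (by positivity),
          neg_mul, mul_assoc, mul_comm q.toReal, hσq, mul_one, mul_comm]
    _ ≤ _ := ofReal_rpow_neg_mul_measure_ball_le_potential μ hlam.le (norm_nonneg x)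
        (add_comm _ _).le

theorem le_of_ne_top (h : PotentialBound μ ν lam p q C) (hlam : 0 ≤ lam) (hq : q ≠ 0)
    (hqt : q ≠ ⊤)
    (hexp : lam = finrank ℝ F * (1 - (1 / p).toReal) + finrank ℝ G * (1 / q).toReal) :
    p ≤ q := by
  by_contra hpq
  rw [not_le] at hpq
  set s := (1 / p).toReal
  set σ := (1 / q).toReal
  set e : ℝ := (finrank ℝ G : ℝ)
  have hq' : 0 < q.toReal := toReal_pos hq hqt
  have hσ_eq : σ = q.toReal⁻¹ := by simp only [σ, one_div, toReal_inv]
  have hσ : 0 < σ := by rw [hσ_eq]; positivity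
  have hf := memLp_logDecay μ (pos_of_gt hpq).ne' hσ.le fun hpt => by
    rw [hσ_eq, inv_mul_eq_div, one_lt_div hq']
    exact (toReal_lt_toReal hqt hpt).2 hpq
  obtain ⟨K, hK, hKle⟩ := exists_mul_lintegral_le_potential_logDecay μ hlam (finrank ℝ F * s) σ
  have hdiv : ∫⁻ x, (Ioi 2).indicator
      (fun r => ENNReal.ofReal (r ^ (-e) * Real.log r ^ (-1 : ℝ))) ‖x‖ ∂ν = ⊤ :=
    not_lt_top_iff.1 fun hlt =>
      lt_irrefl _ ((lintegral_indicator_Ioi_two_norm_rpow_log_lt_top_iff ν 1).1 hlt)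
  refine h.qnorm_ne_top hf (qnorm_eq_top_of_forall_le ν hq hqt
    (mul_ne_zero hK (ENNReal.ofReal_pos.2 (by positivity : (0 : ℝ) < 2 ^ (-1 - e * σ - σ))).ne')
    hdiv fun x => ?_)
  by_cases hx : ‖x‖ ∈ Ioi 2
  · have hx2 : 2 < ‖x‖ := hx
    have hx0 : 0 < ‖x‖ := two_pos.trans hx2
    have hlog : 0 < Real.log ‖x‖ := Real.log_pos (by linarith)
    have hexponent : (finrank ℝ F : ℝ) - 1 - finrank ℝ F * s - lam = -1 - e * σ := by
      rw [hexp]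
      ring
    calc K * ENNReal.ofReal (2 ^ (-1 - e * σ - σ)) *
          (Ioi 2).indicator (fun r => ENNReal.ofReal (r ^ (-e) * Real.log r ^ (-1 : ℝ))) ‖x‖ ^ σ
        = K * ENNReal.ofReal (2 ^ (-1 - e * σ - σ) * ‖x‖ ^ (-(e * σ)) * Real.log ‖x‖ ^ (-σ)) := by
          rw [indicator_of_mem hx, ofReal_rpow_of_nonneg (by positivity) hσ.le,
            Real.mul_rpow (by positivity) (by positivity), ← Real.rpow_mul hx0.le,
            ← Real.rpow_mul hlog.le, mul_assoc, ← ENNReal.ofReal_mul (by positivity)]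
          ring_nf
      _ ≤ K * ∫⁻ r in Ioi ‖x‖, ENNReal.ofReal (r ^ (-1 - e * σ) * Real.log r ^ (-σ)) := by
          gcongr
          exact ofReal_rpow_mul_log_rpow_le_lintegral_Ioi (by positivity) hσ.le hx2.le
      _ = K * ∫⁻ r in Ioi (max 2 ‖x‖), ENNReal.ofReal
            (r ^ ((finrank ℝ F : ℝ) - 1 - finrank ℝ F * s - lam) * Real.log r ^ (-σ)) := by
          rw [max_eq_right hx2.le, hexponent]
      _ ≤ _ := hKle ‖x‖ hx0.le
  · rw [indicator_of_notMem hx, zero_rpow_of_pos hσ, mul_zero]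
    exact zero_le

end

theorem ne_top [ν.IsOpenPosMeasure] (h : PotentialBound μ ν lam p q C) (hlam : 0 ≤ lam) (hp : 1 < p)
    (hexp : lam = finrank ℝ F * (1 - (1 / p).toReal) + finrank ℝ G * (1 / q).toReal) :
    q ≠ ⊤ := by
  rintro rfl
  set s := (1 / p).toReal
  have hf := memLp_logDecay μ (zero_lt_one.trans hp).ne' zero_le_one fun hpt => by
    simpa using (toReal_lt_toReal one_ne_top hpt).2 hp
  obtain ⟨K, hK, hKle⟩ := exists_mul_lintegral_le_potential_logDecay μ hlam (finrank ℝ F * s) 1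
  have hdiv : ∫⁻ r in Ioi (2 : ℝ), ENNReal.ofReal (r ^ (-1 : ℝ) * Real.log r ^ (-1 : ℝ)) = ⊤ :=
    not_lt_top_iff.1 fun hlt =>
      lt_irrefl _ ((lintegral_Ioi_two_rpow_neg_one_mul_log_rpow_lt_top_iff 1).1 hlt)
  have hinfty : ∀ x ∈ ball (0 : G) 2,
      ⊤ ≤ potential μ lam (fun y => logDecay (finrank ℝ F * s) 1 ‖y‖) ‖x‖ := by
    intro x hx
    have hexponent : (finrank ℝ F : ℝ) - 1 - finrank ℝ F * s - lam = -1 := by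
      simp only [hexp, div_top, toReal_zero, mul_zero, add_zero]
      ring
    have := hKle ‖x‖ (norm_nonneg x)
    rwa [max_eq_left (mem_ball_zero_iff.1 hx).le, hexponent, hdiv, mul_top hK] at this
  have := le_qnorm_of_forall_le ν top_ne_zero measurableSet_ball
    (measure_ball_pos ν 0 two_pos).ne' hinfty
  rw [div_top, toReal_zero, rpow_zero, mul_one] at this
  exact h.qnorm_ne_top hf (top_le_iff.1 this)

end PotentialBound

/-- Necessity for the kernel `(|x|+|y|)^{−λ}`: if
`‖∫ f(y)(|x|+|y|)^{−λ} dy‖_{L^q(ℝ^m)} ≲ ‖f‖_{L^p(ℝ^n)}` holds for all `f ∈ L^p`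
with `λ > 0` and `0 < p, q ≤ ∞`, then `λ = n/p' + m/q` and `1 < p ≤ q < ∞`. -/
theorem stmt6 (n m : ℕ) (hn : 0 < n) (hm : 0 < m) (lam : ℝ) (p q : ℝ≥0∞)
    (hlam : 0 < lam) (hp : 0 < p) (hq : 0 < q) (C : ℝ)
    (hbound : ∀ f : E n → ℝ, MemLp f p volume →
      qnorm volume q (fun x : E m => ∫⁻ y : E n,
          ENNReal.ofReal |f y| * ENNReal.ofReal ((‖x‖ + ‖y‖) ^ (-lam)) ∂volume)
        ≤ ENNReal.ofReal C * eLpNorm f p volume) :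
    1 < p ∧ p ≤ q ∧ q ≠ ⊤ ∧ lam = n * (1 - (1/p).toReal) + m * (1/q).toReal := by
  have : NeZero n := ⟨hn.ne'⟩
  have : NeZero m := ⟨hm.ne'⟩
  have h : PotentialBound (volume : Measure (E n)) (volume : Measure (E m)) lam p q C := hbound
  have hexp := h.exponent_eq hlam.le hq.ne'
  have hp1 := h.one_lt hp.ne' hq.ne' hlam hexp
  have hqt := h.ne_top hlam.le hp1 hexp
  refine ⟨hp1, h.le_of_ne_top hlam.le hq.ne' hqt hexp, hqt, ?_⟩
  simpa only [finrank_euclideanSpace_fin] using hexp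
end

section
/- Let 1 < p₁, p₂ < ∞ with 1/p₁ + 1/p₂ ≥ 1, and let n₁, n₂, m be positive integers. Let D₁, D₂ be n₁×m and n₂×m matrices respectively. Then for all f₁ ∈ L^{p₁}(ℝ^{n₁}), f₂ ∈ L^{p₂}(ℝ^{n₂}), the bilinear fractional integral I(f₁,f₂)(x) = ∫_{ℝ^{n₁+n₂}} f₁(y₁)f₂(y₂)/(|D₁x − y₁| + |D₂x − y₂|)^{n₁/p₁' + n₂/p₂'} dy₁dy₂ satisfies sup_{x ∈ ℝ^m} |I(f₁,f₂)(x)| ≲ ‖f₁‖_{L^{p₁}} ‖f₂‖_{L^{p₂}}. -/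
/-!
Translating `yᵢ ↦ Dᵢ x - yᵢ` removes `x`, so it suffices to bound
`∫∫ g₁(y₁) g₂(y₂) (|y₁| + |y₂|)^(-λ)` with `λ = α₁ + α₂`, `αᵢ = nᵢ/pᵢ'`. Cut both spaces into dyadic
shells `2^j ≤ |y| < 2^(j+1)`. On the shell pair `(j, k)` the kernel is at most `2^(-λ max j k)`, and
Hölder on a shell gives `∫_{shell j} g₁ ≲ 2^(j α₁) a_j` with `a_j` the `L^{p₁}` norm of `g₁` on the
shell; so the integral is at most `∑_{j,k} a_j b_k 2^(-min(α₁, α₂) |j - k|)`. This discrete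
convolution is bounded by Hölder in `ℓ^{p₁} × ℓ^{p₁'}` followed by `ℓ^{p₂} ⊆ ℓ^{p₁'}`, which is
where `1/p₁ + 1/p₂ ≥ 1` enters.
-/

open MeasureTheory ENNReal

open Metric

namespace ENNReal

variable {ι : Type*}

theorem inner_le_Lp_mul_Lq_tsum {p q : ℝ} (hpq : p.HolderConjugate q) (a b : ι → ℝ≥0∞) :
    ∑' i, a i * b i ≤ (∑' i, a i ^ p) ^ (1 / p) * (∑' i, b i ^ q) ^ (1 / q) := by
  let _ : MeasurableSpace ι := ⊤
  simpa only [lintegral_count, Pi.mul_apply] using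
    lintegral_mul_le_Lp_mul_Lq (Measure.count : Measure ι) hpq measurable_from_top.aemeasurable
      measurable_from_top.aemeasurable

theorem tsum_rpow_rpow_le_of_le {p q : ℝ} (hp : 0 < p) (hpq : p ≤ q) (b : ι → ℝ≥0∞) :
    (∑' i, b i ^ q) ^ (1 / q) ≤ (∑' i, b i ^ p) ^ (1 / p) := by
  set B := (∑' i, b i ^ p) ^ (1 / p) with hB
  have hBp : B ^ p = ∑' i, b i ^ p := by rw [hB, one_div, rpow_inv_rpow hp.ne']
  have hb : ∀ i, b i ≤ B := fun i => by
    rw [hB, one_div, le_rpow_inv_iff hp]; exact ENNReal.le_tsum i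
  have hqp : 0 ≤ q - p := sub_nonneg.2 hpq
  have hsum : ∑' i, b i ^ q ≤ B ^ q := calc
    ∑' i, b i ^ q = ∑' i, b i ^ p * b i ^ (q - p) := by
      refine tsum_congr fun i => ?_
      rw [← rpow_add_of_nonneg _ _ hp.le hqp, add_sub_cancel]
    _ ≤ ∑' i, b i ^ p * B ^ (q - p) := by gcongr with i; exact hb i
    _ = B ^ q := by rw [ENNReal.tsum_mul_right, ← hBp, ← rpow_add_of_nonneg _ _ hp.le hqp,
        add_sub_cancel]
  rwa [one_div, rpow_inv_le_iff (hp.trans_le hpq)]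

theorem tsum_pow_natAbs_ne_top {r : ℝ≥0∞} (hr : r < 1) : ∑' m : ℤ, r ^ m.natAbs ≠ ∞ := by
  rw [← tsum_nat_add_neg_add_one ENNReal.summable]
  refine ne_top_of_le_ne_top (b := ∑' n : ℕ, 2 * r ^ n) ?_ (ENNReal.tsum_le_tsum fun n => ?_)
  · rw [ENNReal.tsum_mul_left, tsum_geometric]
    exact mul_ne_top ofNat_ne_top (inv_ne_top.2 (tsub_pos_of_lt hr).ne')
  · have : (-((n : ℤ) + 1)).natAbs = n + 1 := by omega
    rw [Int.natAbs_natCast, this, two_mul]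
    exact add_le_add le_rfl (pow_le_pow_of_le_one zero_le hr.le n.le_succ)

theorem tsum_tsum_mul_mul_sub_le {G : Type*} [AddCommGroup G] {p q : ℝ} (hpq : p.HolderConjugate q)
    (a b w : G → ℝ≥0∞) :
    ∑' j, ∑' k, a j * b k * w (j - k) ≤
      (∑' m, w m) * (∑' j, a j ^ p) ^ (1 / p) * (∑' k, b k ^ q) ^ (1 / q) := calc
  ∑' j, ∑' k, a j * b k * w (j - k) = ∑' j, ∑' m, a j * b (j - m) * w m := by
    refine tsum_congr fun j => ?_
    rw [← (Equiv.subLeft j).tsum_eq]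
    simp only [Equiv.subLeft_apply, _root_.sub_sub_cancel]
  _ = ∑' m, (∑' j, a j * b (j - m)) * w m := by
    rw [ENNReal.tsum_comm]; simp only [ENNReal.tsum_mul_right]
  _ ≤ ∑' m, ((∑' j, a j ^ p) ^ (1 / p) * (∑' k, b k ^ q) ^ (1 / q)) * w m := by
    gcongr with m
    calc ∑' j, a j * b (j - m) ≤ (∑' j, a j ^ p) ^ (1 / p) * (∑' j, b (j - m) ^ q) ^ (1 / q) :=
          inner_le_Lp_mul_Lq_tsum hpq _ _
      _ = _ := by congr 2; exact (Equiv.subRight m).tsum_eq (fun k => b k ^ q)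
  _ = _ := by rw [ENNReal.tsum_mul_left, mul_comm, ← mul_assoc]

theorem tsum_tsum_mul_mul_sub_le_of_one_le_one_div_add_one_div {G : Type*} [AddCommGroup G]
    {p₁ p₂ : ℝ} (hp₁ : 1 < p₁) (hp₂ : 0 < p₂) (hsum : 1 ≤ 1 / p₁ + 1 / p₂) (a b w : G → ℝ≥0∞) :
    ∑' j, ∑' k, a j * b k * w (j - k) ≤
      (∑' m, w m) * (∑' j, a j ^ p₁) ^ (1 / p₁) * (∑' k, b k ^ p₂) ^ (1 / p₂) := by
  have hq := Real.HolderConjugate.conjExponent hp₁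
  have hp₂q : p₂ ≤ p₁.conjExponent := by
    rw [← one_div_le_one_div hq.symm.pos hp₂, one_div, ← hq.one_sub_inv, ← one_div]
    linarith
  calc _ ≤ _ := tsum_tsum_mul_mul_sub_le hq a b w
    _ ≤ _ := by gcongr; exact tsum_rpow_rpow_le_of_le hp₂ hp₂q b

theorem ofReal_two_rpow (x : ℝ) : ENNReal.ofReal (2 ^ x) = 2 ^ x := by
  rw [← ofReal_rpow_of_pos two_pos, ofReal_ofNat]

theorem two_rpow_mul_two_rpow_mul_two_rpow_neg_max_le (α₁ α₂ : ℝ) (j k : ℤ) :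
    (2 : ℝ≥0∞) ^ (j * α₁) * 2 ^ (k * α₂) * 2 ^ (-((α₁ + α₂) * max j k)) ≤
      (2 ^ (-min α₁ α₂)) ^ (j - k).natAbs := by
  rw [← rpow_add _ _ two_ne_zero ofNat_ne_top, ← rpow_add _ _ two_ne_zero ofNat_ne_top,
    ← rpow_natCast, ← rpow_mul, Nat.cast_natAbs]
  refine rpow_le_rpow_of_exponent_le one_le_two ?_
  push_cast
  rcases le_total (j : ℝ) k with h | h
  · rw [max_eq_right h, abs_of_nonpos (sub_nonpos.2 h)]
    nlinarith [min_le_left α₁ α₂]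
  · rw [max_eq_left h, abs_of_nonneg (sub_nonneg.2 h)]
    nlinarith [min_le_right α₁ α₂]

end ENNReal

theorem setLIntegral_le_rpow_mul_measure_rpow {α : Type*} [MeasurableSpace α] {ν : Measure α}
    {p q : ℝ} (hpq : p.HolderConjugate q) {g : α → ℝ≥0∞} (hg : AEMeasurable g ν) (s : Set α) :
    ∫⁻ y in s, g y ∂ν ≤ (∫⁻ y in s, g y ^ p ∂ν) ^ (1 / p) * ν s ^ (1 / q) := by
  simpa using
    ENNReal.lintegral_mul_le_Lp_mul_Lq (ν.restrict s) hpq hg.restrict aemeasurable_const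
      (g := fun _ => (1 : ℝ≥0∞))

theorem lintegral_enorm_sub_rpow_rpow_eq_eLpNorm {G ε : Type*} [AddGroup G] [MeasurableSpace G]
    [MeasurableAdd G] [MeasurableNeg G] (μ : Measure G) [μ.IsAddLeftInvariant] [μ.IsNegInvariant]
    [ENorm ε] (f : G → ε) (c : G) {p : ℝ} (hp : 0 < p) :
    (∫⁻ y, ‖f (c - y)‖ₑ ^ p ∂μ) ^ (1 / p) = eLpNorm f (.ofReal p) μ := by
  rw [eLpNorm_eq_lintegral_rpow_enorm_toReal (by simpa using hp) ofReal_ne_top, toReal_ofReal hp.le,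
    lintegral_sub_left_eq_self (fun y => ‖f y‖ₑ ^ p)]

section DyadicShell

variable {F : Type*} [NormedAddCommGroup F]

def dyadicShell (j : ℤ) : Set F := {y | ‖y‖ ∈ Set.Ico ((2 : ℝ) ^ j) (2 ^ (j + 1))}

theorem measurableSet_dyadicShell [MeasurableSpace F] [OpensMeasurableSpace F] (j : ℤ) :
    MeasurableSet (dyadicShell j : Set F) :=
  measurable_norm measurableSet_Ico

theorem pairwise_disjoint_dyadicShell :
    Pairwise (Function.onFun Disjoint (dyadicShell : ℤ → Set F)) := by
  intro j k hjk
  refine Set.disjoint_left.2 fun y ⟨hj, hj'⟩ ⟨hk, hk'⟩ => hjk ?_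
  have h₁ : j < k + 1 := (zpow_lt_zpow_iff_right₀ _root_.one_lt_two).1 (hj.trans_lt hk')
  have h₂ : k < j + 1 := (zpow_lt_zpow_iff_right₀ _root_.one_lt_two).1 (hk.trans_lt hj')
  omega

theorem iUnion_dyadicShell : ⋃ j, (dyadicShell j : Set F) = {0}ᶜ := by
  ext y
  simp only [Set.mem_iUnion, dyadicShell, Set.mem_ofPred_eq, Set.mem_compl_singleton_iff]
  refine ⟨fun ⟨j, hj, _⟩ => norm_pos_iff.1 ((zpow_pos two_pos j).trans_le hj), fun hy => ?_⟩
  exact exists_mem_Ico_zpow (norm_pos_iff.2 hy) _root_.one_lt_two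

theorem lintegral_eq_tsum_setLIntegral_dyadicShell [MeasurableSpace F] [OpensMeasurableSpace F]
    (μ : Measure F) [NullSingletonClass μ] (g : F → ℝ≥0∞) :
    ∫⁻ y, g y ∂μ = ∑' j, ∫⁻ y in dyadicShell j, g y ∂μ := by
  rw [← lintegral_iUnion measurableSet_dyadicShell pairwise_disjoint_dyadicShell,
    iUnion_dyadicShell, restrict_compl_singleton]

theorem tsum_rpow_setLIntegral_dyadicShell [MeasurableSpace F] [OpensMeasurableSpace F]
    (μ : Measure F) [NullSingletonClass μ] (g : F → ℝ≥0∞) {p : ℝ} (hp : p ≠ 0) :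
    ∑' j, ((∫⁻ y in dyadicShell j, g y ∂μ) ^ (1 / p)) ^ p = ∫⁻ y, g y ∂μ := by
  simp only [one_div, rpow_inv_rpow hp, ← lintegral_eq_tsum_setLIntegral_dyadicShell]

theorem ofReal_add_norm_rpow_neg_le_of_mem_dyadicShell {F' : Type*} [NormedAddCommGroup F']
    {y₁ : F} {y₂ : F'} {j k : ℤ} (h₁ : y₁ ∈ dyadicShell j) (h₂ : y₂ ∈ dyadicShell k)
    {s : ℝ} (hs : 0 ≤ s) :
    ENNReal.ofReal ((‖y₁‖ + ‖y₂‖) ^ (-s)) ≤ 2 ^ (-(s * max j k)) := by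
  have hmax : (2 : ℝ) ^ max j k ≤ ‖y₁‖ + ‖y₂‖ := by
    rcases le_total j k with h | h
    · rw [max_eq_right h]; linarith [h₂.1, norm_nonneg y₁]
    · rw [max_eq_left h]; linarith [h₁.1, norm_nonneg y₂]
  calc ENNReal.ofReal ((‖y₁‖ + ‖y₂‖) ^ (-s))
      ≤ ENNReal.ofReal (((2 : ℝ) ^ max j k) ^ (-s)) :=
        ofReal_le_ofReal (Real.rpow_le_rpow_of_nonpos (by positivity) hmax (neg_nonpos.2 hs))
    _ = 2 ^ (-(s * max j k)) := by
        rw [← Real.rpow_intCast, ← Real.rpow_mul zero_le_two, ENNReal.ofReal_two_rpow]; ring_nf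

variable [NormedSpace ℝ F] [FiniteDimensional ℝ F] [MeasurableSpace F] [BorelSpace F]
  [Nontrivial F] (μ : Measure F) [μ.IsAddHaarMeasure]

theorem measure_dyadicShell_le (j : ℤ) :
    μ (dyadicShell j) ≤ 2 ^ ((j + 1) * Module.finrank ℝ F : ℝ) * μ (ball 0 1) := calc
  μ (dyadicShell j) ≤ μ (ball 0 (2 ^ (j + 1))) :=
    measure_mono fun y hy => mem_ball_zero_iff.2 hy.2
  _ = _ := by
    rw [Measure.addHaar_ball _ _ (by positivity), ← Real.rpow_intCast, ← Real.rpow_natCast,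
      ← Real.rpow_mul zero_le_two, ENNReal.ofReal_two_rpow]
    push_cast; rfl

theorem exists_setLIntegral_dyadicShell_le {p : ℝ} (hp : 1 < p) :
    ∃ Q : ℝ≥0∞, Q ≠ ∞ ∧ ∀ g : F → ℝ≥0∞, AEMeasurable g μ → ∀ j : ℤ,
      ∫⁻ y in dyadicShell j, g y ∂μ ≤
        Q * 2 ^ (j * (Module.finrank ℝ F * (1 - 1 / p))) *
          (∫⁻ y in dyadicShell j, g y ^ p ∂μ) ^ (1 / p) := by
  have hq := Real.HolderConjugate.conjExponent hp
  have h1q : 1 / p.conjExponent = 1 - 1 / p := by rw [one_div, one_div, hq.one_sub_inv]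
  have hp' : 0 ≤ 1 - 1 / p := h1q ▸ (one_div_pos.2 hq.symm.pos).le
  set α : ℝ := Module.finrank ℝ F * (1 - 1 / p)
  refine ⟨2 ^ α * μ (ball 0 1) ^ (1 - 1 / p), mul_ne_top (rpow_ne_top_of_nonneg (by positivity)
    ofNat_ne_top) (rpow_ne_top_of_nonneg hp' measure_ball_lt_top.ne), fun g hg j => ?_⟩
  calc ∫⁻ y in dyadicShell j, g y ∂μ
      ≤ (∫⁻ y in dyadicShell j, g y ^ p ∂μ) ^ (1 / p) * μ (dyadicShell j) ^ (1 - 1 / p) := by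
        rw [← h1q]; exact setLIntegral_le_rpow_mul_measure_rpow hq hg _
    _ ≤ (∫⁻ y in dyadicShell j, g y ^ p ∂μ) ^ (1 / p) *
          (2 ^ ((j + 1) * Module.finrank ℝ F : ℝ) * μ (ball 0 1)) ^ (1 - 1 / p) := by
        gcongr; exact measure_dyadicShell_le μ j
    _ = _ := by
        rw [mul_rpow_of_nonneg _ _ hp', ← rpow_mul,
          show (j + 1) * Module.finrank ℝ F * (1 - 1 / p) = j * α + α by ring,
          rpow_add _ _ two_ne_zero ofNat_ne_top]
        ring

end DyadicShell

theorem lintegral_lintegral_le_tsum_tsum_dyadicShell {F₁ F₂ : Type*}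
    [NormedAddCommGroup F₁] [MeasurableSpace F₁] [OpensMeasurableSpace F₁]
    [NormedAddCommGroup F₂] [MeasurableSpace F₂] [OpensMeasurableSpace F₂]
    (μ₁ : Measure F₁) (μ₂ : Measure F₂) [NullSingletonClass μ₁] [NullSingletonClass μ₂]
    {g₁ : F₁ → ℝ≥0∞} {g₂ : F₂ → ℝ≥0∞} (hg₁ : AEMeasurable g₁ μ₁) (hg₂ : AEMeasurable g₂ μ₂)
    {K : F₁ → F₂ → ℝ≥0∞} {W : ℤ → ℤ → ℝ≥0∞}
    (hK : ∀ j k, ∀ y₁ ∈ dyadicShell j, ∀ y₂ ∈ dyadicShell k, K y₁ y₂ ≤ W j k) :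
    ∫⁻ y₁, ∫⁻ y₂, g₁ y₁ * g₂ y₂ * K y₁ y₂ ∂μ₂ ∂μ₁ ≤
      ∑' j, ∑' k, (∫⁻ y in dyadicShell j, g₁ y ∂μ₁) * (∫⁻ y in dyadicShell k, g₂ y ∂μ₂) *
        W j k := by
  rw [lintegral_eq_tsum_setLIntegral_dyadicShell μ₁]
  refine ENNReal.tsum_le_tsum fun j => ?_
  calc ∫⁻ y₁ in dyadicShell j, ∫⁻ y₂, g₁ y₁ * g₂ y₂ * K y₁ y₂ ∂μ₂ ∂μ₁
      ≤ ∫⁻ y₁ in dyadicShell j, g₁ y₁ * ∑' k, (∫⁻ y in dyadicShell k, g₂ y ∂μ₂) * W j k ∂μ₁ := by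
        refine setLIntegral_mono' (measurableSet_dyadicShell j) fun y₁ hy₁ => ?_
        rw [lintegral_eq_tsum_setLIntegral_dyadicShell μ₂, ← ENNReal.tsum_mul_left]
        refine ENNReal.tsum_le_tsum fun k => ?_
        calc ∫⁻ y₂ in dyadicShell k, g₁ y₁ * g₂ y₂ * K y₁ y₂ ∂μ₂
            ≤ ∫⁻ y₂ in dyadicShell k, g₁ y₁ * g₂ y₂ * W j k ∂μ₂ :=
              setLIntegral_mono' (measurableSet_dyadicShell k) fun y₂ hy₂ => by
                gcongr; exact hK j k y₁ hy₁ y₂ hy₂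
          _ = _ := by
              rw [lintegral_mul_const'' _ (hg₂.restrict.const_mul _),
                lintegral_const_mul'' _ hg₂.restrict, mul_assoc]
    _ = ∑' k, (∫⁻ y in dyadicShell j, g₁ y ∂μ₁) * (∫⁻ y in dyadicShell k, g₂ y ∂μ₂) * W j k := by
        rw [lintegral_mul_const'' _ hg₁.restrict, ← ENNReal.tsum_mul_left]
        simp only [mul_assoc]

section Bilinear

open Module (finrank)

variable {F₁ F₂ : Type*}
  [NormedAddCommGroup F₁] [NormedSpace ℝ F₁] [FiniteDimensional ℝ F₁] [MeasurableSpace F₁]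
  [BorelSpace F₁] [Nontrivial F₁] (μ₁ : Measure F₁) [μ₁.IsAddHaarMeasure]
  [NormedAddCommGroup F₂] [NormedSpace ℝ F₂] [FiniteDimensional ℝ F₂] [MeasurableSpace F₂]
  [BorelSpace F₂] [Nontrivial F₂] (μ₂ : Measure F₂) [μ₂.IsAddHaarMeasure]
  {p₁ p₂ : ℝ}

theorem exists_lintegral_lintegral_mul_ofReal_add_norm_rpow_le (hp₁ : 1 < p₁) (hp₂ : 1 < p₂)
    (hsum : 1 ≤ 1 / p₁ + 1 / p₂) :
    ∃ C : ℝ≥0∞, C ≠ ∞ ∧ ∀ (g₁ : F₁ → ℝ≥0∞) (g₂ : F₂ → ℝ≥0∞), AEMeasurable g₁ μ₁ →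
      AEMeasurable g₂ μ₂ →
      ∫⁻ y₁, ∫⁻ y₂, g₁ y₁ * g₂ y₂ * ENNReal.ofReal ((‖y₁‖ + ‖y₂‖) ^
          (-(finrank ℝ F₁ * (1 - 1 / p₁) + finrank ℝ F₂ * (1 - 1 / p₂)))) ∂μ₂ ∂μ₁ ≤
        C * (∫⁻ y, g₁ y ^ p₁ ∂μ₁) ^ (1 / p₁) * (∫⁻ y, g₂ y ^ p₂ ∂μ₂) ^ (1 / p₂) := by
  set α₁ : ℝ := finrank ℝ F₁ * (1 - 1 / p₁)
  set α₂ : ℝ := finrank ℝ F₂ * (1 - 1 / p₂)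
  have hα₁ : 0 < α₁ := mul_pos (Nat.cast_pos.2 Module.finrank_pos)
    (sub_pos.2 ((div_lt_one (by linarith)).2 hp₁))
  have hα₂ : 0 < α₂ := mul_pos (Nat.cast_pos.2 Module.finrank_pos)
    (sub_pos.2 ((div_lt_one (by linarith)).2 hp₂))
  obtain ⟨Q₁, hQ₁, hshell₁⟩ := exists_setLIntegral_dyadicShell_le μ₁ hp₁
  obtain ⟨Q₂, hQ₂, hshell₂⟩ := exists_setLIntegral_dyadicShell_le μ₂ hp₂
  set r : ℝ≥0∞ := 2 ^ (-min α₁ α₂)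
  have hr : r < 1 :=
    rpow_lt_one_of_one_lt_of_neg ENNReal.one_lt_two (neg_neg_of_pos (lt_min hα₁ hα₂))
  refine ⟨Q₁ * Q₂ * ∑' m : ℤ, r ^ m.natAbs,
    mul_ne_top (mul_ne_top hQ₁ hQ₂) (tsum_pow_natAbs_ne_top hr), fun g₁ g₂ hg₁ hg₂ => ?_⟩
  set a : ℤ → ℝ≥0∞ := fun j => (∫⁻ y in dyadicShell j, g₁ y ^ p₁ ∂μ₁) ^ (1 / p₁)
  set b : ℤ → ℝ≥0∞ := fun k => (∫⁻ y in dyadicShell k, g₂ y ^ p₂ ∂μ₂) ^ (1 / p₂)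
  have ha : (∑' j, a j ^ p₁) ^ (1 / p₁) = (∫⁻ y, g₁ y ^ p₁ ∂μ₁) ^ (1 / p₁) := by
    rw [tsum_rpow_setLIntegral_dyadicShell μ₁ _ (by linarith)]
  have hb : (∑' k, b k ^ p₂) ^ (1 / p₂) = (∫⁻ y, g₂ y ^ p₂ ∂μ₂) ^ (1 / p₂) := by
    rw [tsum_rpow_setLIntegral_dyadicShell μ₂ _ (by linarith)]
  calc _ ≤ ∑' j, ∑' k, (∫⁻ y in dyadicShell j, g₁ y ∂μ₁) * (∫⁻ y in dyadicShell k, g₂ y ∂μ₂) *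
        2 ^ (-((α₁ + α₂) * max j k)) :=
        lintegral_lintegral_le_tsum_tsum_dyadicShell μ₁ μ₂ hg₁ hg₂ fun j k y₁ hy₁ y₂ hy₂ =>
          ofReal_add_norm_rpow_neg_le_of_mem_dyadicShell hy₁ hy₂ (by positivity)
    _ ≤ ∑' j, ∑' k, Q₁ * Q₂ * (a j * b k * r ^ (j - k).natAbs) := by
        refine ENNReal.tsum_le_tsum fun j => ENNReal.tsum_le_tsum fun k => ?_
        calc _ ≤ (Q₁ * 2 ^ (j * α₁) * a j) * (Q₂ * 2 ^ (k * α₂) * b k) *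
              2 ^ (-((α₁ + α₂) * max j k)) := by
              gcongr; exacts [hshell₁ g₁ hg₁ j, hshell₂ g₂ hg₂ k]
          _ = Q₁ * Q₂ * (a j * b k *
              (2 ^ (j * α₁) * 2 ^ (k * α₂) * 2 ^ (-((α₁ + α₂) * max j k)))) := by ring
          _ ≤ _ := by gcongr; exact two_rpow_mul_two_rpow_mul_two_rpow_neg_max_le α₁ α₂ j k
    _ ≤ Q₁ * Q₂ * ((∑' m : ℤ, r ^ m.natAbs) * (∑' j, a j ^ p₁) ^ (1 / p₁) *
          (∑' k, b k ^ p₂) ^ (1 / p₂)) := by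
        simp only [ENNReal.tsum_mul_left]
        gcongr
        exact tsum_tsum_mul_mul_sub_le_of_one_le_one_div_add_one_div hp₁ (by linarith) hsum a b _
    _ = _ := by rw [ha, hb]; ring

theorem exists_lintegral_lintegral_enorm_mul_add_norm_sub_rpow_le (hp₁ : 1 < p₁) (hp₂ : 1 < p₂)
    (hsum : 1 ≤ 1 / p₁ + 1 / p₂) :
    ∃ C : ℝ≥0∞, C ≠ ∞ ∧ ∀ (f₁ : F₁ → ℝ) (f₂ : F₂ → ℝ) (c₁ : F₁) (c₂ : F₂),
      AEMeasurable f₁ μ₁ → AEMeasurable f₂ μ₂ →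
      ∫⁻ y₁, ∫⁻ y₂, ‖f₁ y₁ * f₂ y₂ * (‖c₁ - y₁‖ + ‖c₂ - y₂‖) ^
          (-(finrank ℝ F₁ * (1 - 1 / p₁) + finrank ℝ F₂ * (1 - 1 / p₂)))‖ₑ ∂μ₂ ∂μ₁ ≤
        C * eLpNorm f₁ (.ofReal p₁) μ₁ * eLpNorm f₂ (.ofReal p₂) μ₂ := by
  obtain ⟨C, hC, hbound⟩ :=
    exists_lintegral_lintegral_mul_ofReal_add_norm_rpow_le μ₁ μ₂ hp₁ hp₂ hsum
  refine ⟨C, hC, fun f₁ f₂ c₁ c₂ hf₁ hf₂ => ?_⟩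
  have key := hbound (fun y => ‖f₁ (c₁ - y)‖ₑ) (fun y => ‖f₂ (c₂ - y)‖ₑ)
    (hf₁.comp_quasiMeasurePreserving
      (μ₁.measurePreserving_sub_left c₁).quasiMeasurePreserving).enorm
    (hf₂.comp_quasiMeasurePreserving
      (μ₂.measurePreserving_sub_left c₂).quasiMeasurePreserving).enorm
  rw [lintegral_enorm_sub_rpow_rpow_eq_eLpNorm μ₁ f₁ c₁ (by linarith),
    lintegral_enorm_sub_rpow_rpow_eq_eLpNorm μ₂ f₂ c₂ (by linarith)] at key
  refine le_of_eq_of_le ?_ key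
  conv_rhs => rw [← lintegral_sub_left_eq_self _ c₁]
  refine lintegral_congr fun y₁ => ?_
  conv_rhs => rw [← lintegral_sub_left_eq_self _ c₂]
  refine lintegral_congr fun y₂ => ?_
  simp only [_root_.sub_sub_cancel, enorm_mul, Real.enorm_of_nonneg (Real.rpow_nonneg
    (add_nonneg (norm_nonneg _) (norm_nonneg _)) _)]

end Bilinear

theorem stmt8_general (n₁ n₂ m : ℕ) (hn₁ : 0 < n₁) (hn₂ : 0 < n₂)
    (p₁ p₂ : ℝ) (hp₁ : 1 < p₁) (hp₂ : 1 < p₂) (hsum : 1 ≤ 1/p₁ + 1/p₂)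
    (D₁ : Matrix (Fin n₁) (Fin m) ℝ) (D₂ : Matrix (Fin n₂) (Fin m) ℝ) :
    ∃ C : ℝ, 0 < C ∧ ∀ (f₁ : E n₁ → ℝ) (f₂ : E n₂ → ℝ),
      MemLp f₁ (ENNReal.ofReal p₁) volume → MemLp f₂ (ENNReal.ofReal p₂) volume →
      ∀ x : E m,
        |∫ y₁ : E n₁, ∫ y₂ : E n₂, f₁ y₁ * f₂ y₂ *
            (‖mvec D₁ x - y₁‖ + ‖mvec D₂ x - y₂‖) ^
              (-(n₁ * (1 - 1/p₁) + n₂ * (1 - 1/p₂))) ∂volume ∂volume|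
          ≤ C * (eLpNorm f₁ (ENNReal.ofReal p₁) volume).toReal *
              (eLpNorm f₂ (ENNReal.ofReal p₂) volume).toReal := by
  have : NeZero n₁ := ⟨hn₁.ne'⟩
  have : NeZero n₂ := ⟨hn₂.ne'⟩
  obtain ⟨C, hC, hbound⟩ := exists_lintegral_lintegral_enorm_mul_add_norm_sub_rpow_le
    (volume : Measure (E n₁)) (volume : Measure (E n₂)) hp₁ hp₂ hsum
  simp only [finrank_euclideanSpace_fin] at hbound
  refine ⟨C.toReal + 1, by positivity, fun f₁ f₂ hf₁ hf₂ x => ?_⟩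
  have hI := hbound f₁ f₂ (mvec D₁ x) (mvec D₂ x) hf₁.1.aemeasurable hf₂.1.aemeasurable
  have hfin := mul_ne_top (mul_ne_top hC hf₁.eLpNorm_ne_top) hf₂.eLpNorm_ne_top
  rw [← Real.norm_eq_abs, ← toReal_enorm]
  calc _ ≤ (C * eLpNorm f₁ (.ofReal p₁) volume * eLpNorm f₂ (.ofReal p₂) volume).toReal :=
        toReal_mono hfin <| (enorm_integral_le_lintegral_enorm _).trans <|
          (lintegral_mono fun _ => enorm_integral_le_lintegral_enorm _).trans hI
    _ = C.toReal * (eLpNorm f₁ (.ofReal p₁) volume).toReal *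
          (eLpNorm f₂ (.ofReal p₂) volume).toReal := by simp only [toReal_mul]
    _ ≤ _ := by gcongr; linarith

/-- Endpoint `q = ∞`: for `1 < p₁, p₂ < ∞` with `1/p₁ + 1/p₂ ≥ 1` and arbitrary
matrices `D₁, D₂`, the bilinear fractional integral with exponent
`λ = n₁/p₁' + n₂/p₂'` is uniformly bounded:
`sup_x |I(f₁,f₂)(x)| ≲ ‖f₁‖_{p₁} ‖f₂‖_{p₂}`. -/
theorem stmt8 (n₁ n₂ m : ℕ) (hn₁ : 0 < n₁) (hn₂ : 0 < n₂) (hm : 0 < m)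
    (p₁ p₂ : ℝ) (hp₁ : 1 < p₁) (hp₂ : 1 < p₂) (hsum : 1 ≤ 1/p₁ + 1/p₂)
    (D₁ : Matrix (Fin n₁) (Fin m) ℝ) (D₂ : Matrix (Fin n₂) (Fin m) ℝ) :
    ∃ C : ℝ, 0 < C ∧ ∀ (f₁ : E n₁ → ℝ) (f₂ : E n₂ → ℝ),
      MemLp f₁ (ENNReal.ofReal p₁) volume → MemLp f₂ (ENNReal.ofReal p₂) volume →
      ∀ x : E m,
        |∫ y₁ : E n₁, ∫ y₂ : E n₂, f₁ y₁ * f₂ y₂ *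
            (‖mvec D₁ x - y₁‖ + ‖mvec D₂ x - y₂‖) ^
              (-(n₁ * (1 - 1/p₁) + n₂ * (1 - 1/p₂))) ∂volume ∂volume|
          ≤ C * (eLpNorm f₁ (ENNReal.ofReal p₁) volume).toReal *
              (eLpNorm f₂ (ENNReal.ofReal p₂) volume).toReal :=
  stmt8_general n₁ n₂ m hn₁ hn₂ p₁ p₂ hp₁ hp₂ hsum D₁ D₂
end

section
/- Let n > m ≥ 1 be integers, 1 < p < ∞, and λ = (n−m)/p' + m. Then the estimate ‖∫_{ℝ^m} h(x)(|x − y₁| + |y₂|)^{−λ} dx‖_{L^{p'}_{(y₁,y₂)}(ℝ^m × ℝ^{n−m})} ≲ ‖h‖_{L^{p'}(ℝ^m)} fails: for h = χ_{\{|x| ≤ 1\}}, the left-hand side is infinite. -/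
/-!
For `|y₁| ≤ 1/2` and `0 < |y₂| ≤ 1/2` the ball of radius `|y₂|` around `y₁` lies in the unit ball,
and on it the kernel is at least `(2|y₂|)^{-λ}`; hence the inner integral is
`≳ |y₂|^{m-λ} = |y₂|^{-(n-m)/p'}`. Its `p'`-th power is `|y₂|^{-(n-m)}`, which in polar
coordinates on `ℝ^{n-m}` is `t^{-1} dt` near the origin and so is not integrable.
-/

open MeasureTheory ENNReal

open Metric Set Module

section AddHaar

variable {V : Type*} [NormedAddCommGroup V] [NormedSpace ℝ V] [FiniteDimensional ℝ V]
  [MeasurableSpace V] [BorelSpace V] (μ : Measure V) [μ.IsAddHaarMeasure]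

-- In polar coordinates `‖x‖ ^ (-d)` becomes `t ^ (-1)` on `(0, r)`.
theorem not_integrableOn_ball_norm_rpow_neg_finrank [Nontrivial V] {r : ℝ} (hr : 0 < r) :
    ¬ IntegrableOn (fun x : V => ‖x‖ ^ (-(finrank ℝ V : ℝ))) (ball 0 r) μ := by
  rw [integrableOn_fun_norm_addHaar μ (f := fun t : ℝ => t ^ (-(finrank ℝ V : ℝ))),
    ← integrableOn_congr_fun (f := fun t : ℝ => t ^ (-1 : ℝ)) _ measurableSet_Ioo,
    intervalIntegral.integrableOn_Ioo_rpow_iff hr]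
  · exact lt_irrefl _
  · intro t ht
    have hd : 1 ≤ finrank ℝ V := finrank_pos
    dsimp only
    rw [smul_eq_mul, ← Real.rpow_natCast, ← Real.rpow_add ht.1, Nat.cast_sub hd]
    ring_nf

theorem lintegral_ball_ofReal_mul_norm_rpow_neg_finrank [Nontrivial V] {r C : ℝ} (hr : 0 < r)
    (hC : 0 < C) :
    ∫⁻ x in ball 0 r, ENNReal.ofReal (C * ‖x‖ ^ (-(finrank ℝ V : ℝ))) ∂μ = ⊤ := by
  by_contra h
  refine not_integrableOn_ball_norm_rpow_neg_finrank μ hr ?_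
  rw [IntegrableOn, ← integrable_const_mul_iff (isUnit_iff_ne_zero.2 hC.ne')]
  refine ⟨(measurable_norm.pow_const _).const_mul C |>.aestronglyMeasurable, ?_⟩
  rw [hasFiniteIntegral_iff_ofReal (.of_forall fun x => by positivity)]
  exact lt_top_iff_ne_top.2 h

theorem le_integral_unitClosedBall_mul_rpow_neg {lam r : ℝ} (hlam : 0 ≤ lam) {y : V}
    (hr : 0 < r) (hyr : ‖y‖ + r ≤ 1) :
    μ.real (ball 0 1) * 2 ^ (-lam) * r ^ ((finrank ℝ V : ℝ) - lam) ≤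
      ∫ x, (if ‖x‖ ≤ 1 then (1 : ℝ) else 0) * (‖x - y‖ + r) ^ (-lam) ∂μ := by
  set f : V → ℝ := fun x => (if ‖x‖ ≤ 1 then (1 : ℝ) else 0) * (‖x - y‖ + r) ^ (-lam)
  have hf : f = (closedBall 0 1).indicator fun x => (‖x - y‖ + r) ^ (-lam) := by
    ext x
    simp [f, indicator]
  have hf_int : Integrable f μ := by
    rw [hf]
    refine (ContinuousOn.integrableOn_compact (isCompact_closedBall _ _) ?_).integrable_indicator
      measurableSet_closedBall
    exact (Continuous.rpow_const (by fun_prop) fun x => .inl (by positivity)).continuousOn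
  have hf_nonneg : 0 ≤ f := fun x => by positivity
  have hball : closedBall y r ⊆ closedBall 0 1 :=
    closedBall_subset_closedBall' (by simpa [add_comm] using hyr)
  have hf_ge : ∀ x ∈ closedBall y r, (2 * r) ^ (-lam) ≤ f x := by
    intro x hx
    rw [hf, indicator_of_mem (hball hx)]
    exact Real.rpow_le_rpow_of_nonpos (by positivity)
      (by linarith [mem_closedBall_iff_norm.1 hx]) (by linarith)
  calc μ.real (ball 0 1) * 2 ^ (-lam) * r ^ ((finrank ℝ V : ℝ) - lam)
      = (2 * r) ^ (-lam) * μ.real (closedBall y r) := by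
        rw [Measure.addHaar_real_closedBall μ y hr.le, Real.mul_rpow zero_le_two hr.le,
          sub_eq_add_neg, Real.rpow_add hr, Real.rpow_natCast]
        ring
    _ ≤ ∫ x in closedBall y r, f x ∂μ :=
        setIntegral_ge_of_const_le_real measurableSet_closedBall measure_closedBall_lt_top.ne hf_ge
          hf_int.integrableOn
    _ ≤ ∫ x, f x ∂μ := setIntegral_le_integral hf_int (.of_forall hf_nonneg)

theorem ofReal_mul_rpow_le_enorm_integral_unitClosedBall_mul_rpow_neg {lam q r : ℝ}
    (hlam : 0 ≤ lam) (hq : 0 ≤ q) {y : V} (hr : 0 < r) (hyr : ‖y‖ + r ≤ 1) :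
    ENNReal.ofReal ((μ.real (ball 0 1) * 2 ^ (-lam)) ^ q * r ^ (((finrank ℝ V : ℝ) - lam) * q)) ≤
      ‖∫ x, (if ‖x‖ ≤ 1 then (1 : ℝ) else 0) * (‖x - y‖ + r) ^ (-lam) ∂μ‖ₑ ^ q := by
  have hle := le_integral_unitClosedBall_mul_rpow_neg μ hlam hr hyr
  rw [Real.rpow_mul hr.le, ← Real.mul_rpow (by positivity) (by positivity),
    ← ENNReal.ofReal_rpow_of_nonneg (by positivity) hq, ← ofReal_norm]
  exact ENNReal.rpow_le_rpow (ENNReal.ofReal_le_ofReal (hle.trans (Real.le_norm_self _))) hq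

end AddHaar

theorem eLpNorm_eq_top_iff_lintegral_rpow_enorm_eq_top {α ε : Type*} [MeasurableSpace α]
    [TopologicalSpace ε] [ContinuousENorm ε] {μ : Measure α} {p : ℝ≥0∞} {f : α → ε}
    (hp₀ : p ≠ 0) (hp : p ≠ ∞) :
    eLpNorm f p μ = ∞ ↔ ∫⁻ a, ‖f a‖ₑ ^ p.toReal ∂μ = ∞ := by
  simpa only [lt_top_iff_ne_top, not_not] using
    (eLpNorm_lt_top_iff_lintegral_rpow_enorm_lt_top (f := f) (μ := μ) hp₀ hp).not

theorem lintegral_prod_eq_top_of_le {α β : Type*} [MeasurableSpace α] [MeasurableSpace β]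
    {μ : Measure α} {ν : Measure β} [SFinite μ] [SFinite ν] {s : Set α} {t : Set β}
    (hμs : μ s ≠ 0) (hs : MeasurableSet s) (ht : MeasurableSet t) {g : β → ℝ≥0∞}
    (hg : Measurable g) (hgt : ∫⁻ y in t, g y ∂ν = ∞) {G : α × β → ℝ≥0∞}
    (hG : ∀ z ∈ s ×ˢ t, g z.2 ≤ G z) :
    ∫⁻ z, G z ∂μ.prod ν = ∞ := by
  refine top_le_iff.1 ?_
  calc ∞ = ∫⁻ _ in s, ∫⁻ y in t, g y ∂ν ∂μ := by rw [hgt, setLIntegral_const, top_mul hμs]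
    _ = ∫⁻ z in s ×ˢ t, g z.2 ∂μ.prod ν :=
        (setLIntegral_prod _ (hg.comp measurable_snd).aemeasurable).symm
    _ ≤ ∫⁻ z in s ×ˢ t, G z ∂μ.prod ν := setLIntegral_mono' (hs.prod ht) hG
    _ ≤ ∫⁻ z, G z ∂μ.prod ν := setLIntegral_le_lintegral _ _

theorem sub_mul_div_sub_one_eq_of_eq {a b p lam : ℝ} (hp : 1 < p)
    (hlam : lam = (a - b) * (1 - 1 / p) + b) :
    (b - lam) * (p / (p - 1)) = b - a := by
  have : p - 1 ≠ 0 := by linarith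
  rw [hlam]
  field_simp
  ring

theorem stmt9_general (n m : ℕ) (hmn : m < n) (p lam : ℝ) (hp : 1 < p)
    (hhom : lam = ((n : ℝ) - m) * (1 - 1/p) + m) :
    eLpNorm (fun y : E m × E (n - m) =>
        ∫ x : E m, (if ‖x‖ ≤ 1 then (1:ℝ) else 0) * (‖x - y.1‖ + ‖y.2‖) ^ (-lam) ∂volume)
      (ENNReal.ofReal (p / (p - 1))) volume = ⊤ := by
  have : Nontrivial (E (n - m)) :=
    Module.nontrivial_of_finrank_pos (R := ℝ) (by simpa using hmn)
  set q := p / (p - 1)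
  have hq : 0 < q := div_pos (by linarith) (by linarith)
  have hlam : 0 ≤ lam := by
    have : 1 / p < 1 := (div_lt_one (by linarith)).2 hp
    have : (m : ℝ) ≤ n := by exact_mod_cast hmn.le
    rw [hhom]
    nlinarith
  have hexp : ((finrank ℝ (E m) : ℝ) - lam) * q = -(finrank ℝ (E (n - m)) : ℝ) := by
    simpa [Nat.cast_sub hmn.le] using sub_mul_div_sub_one_eq_of_eq hp hhom
  set c := volume.real (ball (0 : E m) 1) * 2 ^ (-lam)
  have hc : 0 < c := mul_pos
    (ENNReal.toReal_pos (measure_ball_pos _ _ one_pos).ne' measure_ball_lt_top.ne) (by positivity)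
  rw [eLpNorm_eq_top_iff_lintegral_rpow_enorm_eq_top (by simpa using hq) ofReal_ne_top,
    toReal_ofReal hq.le, Measure.volume_eq_prod]
  refine lintegral_prod_eq_top_of_le (s := closedBall 0 (1 / 2)) (t := ball 0 (1 / 2))
    (measure_closedBall_pos _ _ (by norm_num)).ne' measurableSet_closedBall measurableSet_ball
    (g := fun y₂ => ENNReal.ofReal (c ^ q * ‖y₂‖ ^ (-(finrank ℝ (E (n - m)) : ℝ))))
    (by fun_prop)
    (lintegral_ball_ofReal_mul_norm_rpow_neg_finrank _ (by norm_num) (by positivity)) ?_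
  rintro ⟨y₁, y₂⟩ ⟨hy₁, hy₂⟩
  rcases eq_or_ne y₂ 0 with rfl | hy₂₀
  · -- the junk value `0 ^ (-k) = 0` makes the bound trivial at `y₂ = 0`
    rw [norm_zero, Real.zero_rpow (by simpa using Nat.sub_ne_zero_of_lt hmn), mul_zero, ofReal_zero]
    exact zero_le
  · rw [← hexp]
    exact ofReal_mul_rpow_le_enorm_integral_unitClosedBall_mul_rpow_neg _ hlam hq.le
      (norm_pos_iff.2 hy₂₀)
      (by linarith [mem_closedBall_zero_iff.1 hy₁, mem_ball_zero_iff.1 hy₂])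

/-- Failure of the dual endpoint estimate for the generalized Riesz potential:
for `n > m ≥ 1`, `1 < p < ∞`, `λ = (n−m)/p' + m` and `h = χ_{|x|≤1}`, the
`L^{p'}`-norm in `(y₁,y₂) ∈ ℝ^m × ℝ^{n−m}` of
`∫ h(x)(|x−y₁|+|y₂|)^{−λ} dx` is infinite. -/
theorem stmt9 (n m : ℕ) (hm : 0 < m) (hmn : m < n) (p lam : ℝ) (hp : 1 < p)
    (hhom : lam = ((n : ℝ) - m) * (1 - 1/p) + m) :
    eLpNorm (fun y : E m × E (n - m) =>
        ∫ x : E m, (if ‖x‖ ≤ 1 then (1:ℝ) else 0) * (‖x - y.1‖ + ‖y.2‖) ^ (-lam) ∂volume)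
      (ENNReal.ofReal (p / (p - 1))) volume = ⊤ :=
  stmt9_general n m hmn p lam hp hhom
end

section
/- Let 0 < q < p < ∞, n, m ≥ 1, ε > 0 with q(1+ε)/p < 1, and λ = n/p' + m/q. Define f(y) = χ_{\{|y| ≤ 1/2\}}(y) · |y|^{−n/p} (log(1/|y|))^{−(1+ε)/p} on ℝ^n. Then f ∈ L^p(ℝ^n), and for |x| sufficiently small, ∫_{ℝ^n} f(y)(|x|+|y|)^{−λ} dy ≳ |x|^{−m/q} (log(1/|x|))^{−(1+ε)/p}; consequently the L^q(ℝ^m) norm of x ↦ ∫_{ℝ^n} f(y)(|x|+|y|)^{−λ} dy is infinite. -/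
/-!
In polar coordinates, and after the substitution `t = log (1/‖x‖)`, the integrability of
`‖x‖ ^ (-d) * log (1/‖x‖) ^ b` near the origin of a `d`-dimensional space becomes that of
`t ^ b` near `∞`, i.e. `b < -1`. With `b = -(1 + ε)` this gives `f ∈ Lᵖ`. On the shell
`‖x‖ ≤ ‖y‖ ≤ 2‖x‖`, which has volume `≍ ‖x‖ ^ n`, both `f y` and `(‖x‖ + ‖y‖) ^ (-λ)` are
comparable to their values at `‖y‖ = ‖x‖`; this is the lower bound. Its `q`-th power is
`‖x‖ ^ (-m) * log (1/‖x‖) ^ (-q(1+ε)/p)` with `q(1+ε)/p < 1`, which is not integrable near `0`.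
-/

open MeasureTheory ENNReal

open Set Metric Module

theorem min_rpow_mul_rpow_le_rpow {a b r t γ : ℝ} (ha : 0 < a) (hr : 0 < r)
    (hat : a * r ≤ t) (htb : t ≤ b * r) : min (a ^ γ) (b ^ γ) * r ^ γ ≤ t ^ γ := by
  have ht : 0 < t := (_root_.mul_pos ha hr).trans_le hat
  have hb : 0 < b := pos_of_mul_pos_left (ht.trans_le htb) hr.le
  rcases le_total 0 γ with hγ | hγ
  · calc min (a ^ γ) (b ^ γ) * r ^ γ ≤ a ^ γ * r ^ γ := by gcongr; exact min_le_left _ _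
      _ = (a * r) ^ γ := (Real.mul_rpow ha.le hr.le).symm
      _ ≤ t ^ γ := Real.rpow_le_rpow (by positivity) hat hγ
  · calc min (a ^ γ) (b ^ γ) * r ^ γ ≤ b ^ γ * r ^ γ := by gcongr; exact min_le_right _ _
      _ = (b * r) ^ γ := (Real.mul_rpow hb.le hr.le).symm
      _ ≤ t ^ γ := Real.rpow_le_rpow_of_nonpos ht htb hγ

theorem Real.pow_sub_one_mul_rpow_neg_natCast {x : ℝ} (hx : 0 < x) {k : ℕ} (hk : 0 < k) :
    x ^ (k - 1) * x ^ (-(k : ℝ)) = x⁻¹ := by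
  rw [← Real.rpow_natCast, ← Real.rpow_add hx, Nat.cast_sub hk, Nat.cast_one,
    ← Real.rpow_neg_one]
  ring_nf

theorem Real.mul_rpow_div_mul_rpow_rpow {c a L e b q : ℝ} (hc : 0 ≤ c) (ha : 0 ≤ a)
    (hL : 0 ≤ L) (hq : q ≠ 0) :
    (c * a ^ (e / q) * L ^ b) ^ q = c ^ q * (a ^ e * L ^ (b * q)) := by
  rw [Real.mul_rpow (by positivity) (by positivity), Real.mul_rpow hc (by positivity),
    ← Real.rpow_mul ha, ← Real.rpow_mul hL, div_mul_cancel₀ _ hq, mul_assoc]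

theorem Real.log_one_div_nonneg {t : ℝ} (ht0 : 0 ≤ t) (ht1 : t ≤ 1) :
    0 ≤ Real.log (1 / t) := by
  rw [one_div, Real.log_inv, neg_nonneg]
  exact Real.log_nonpos ht0 ht1

theorem integrableOn_Ioo_inv_mul_log_one_div_rpow_iff {r b : ℝ} (hr0 : 0 < r) (hr1 : r < 1) :
    IntegrableOn (fun y => y⁻¹ * Real.log (1 / y) ^ b) (Ioo 0 r) ↔ b < -1 := by
  have himage : (fun y => -Real.log y) '' Ioo 0 r = Ioi (-Real.log r) := by
    rw [← image_image Neg.neg Real.log, Real.image_log_Ioo_zero hr0, image_neg_Iio]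
  have hderiv : ∀ y ∈ Ioo 0 r, HasDerivWithinAt (fun y => -Real.log y) (-y⁻¹) (Ioo 0 r) y :=
    fun y hy => (Real.hasDerivAt_log hy.1.ne').neg.hasDerivWithinAt
  rw [← integrableOn_Ioi_rpow_iff (neg_pos.2 (Real.log_neg hr0 hr1)), ← himage,
    integrableOn_image_iff_integrableOn_abs_deriv_smul measurableSet_Ioo hderiv
      (fun y hy z hz h => Real.log_injOn_pos hy.1 hz.1 (neg_inj.1 h))]
  refine integrableOn_congr_fun (fun y hy => ?_) measurableSet_Ioo
  simp [abs_of_pos hy.1, Real.log_inv]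

noncomputable def truncatedPowLog {V : Type*} [Norm V] (R α β : ℝ) (x : V) : ℝ :=
  if ‖x‖ ≤ R then ‖x‖ ^ α * Real.log (1 / ‖x‖) ^ β else 0

theorem measurable_truncatedPowLog {V : Type*} [NormedAddCommGroup V] [MeasurableSpace V]
    [BorelSpace V] (R α β : ℝ) : Measurable (truncatedPowLog (V := V) R α β) :=
  Measurable.ite (measurableSet_le (by fun_prop) measurable_const) (by fun_prop) measurable_const

theorem mul_rpow_mul_log_rpow_le_truncatedPowLog_mul {V : Type*} [Norm V] {R α β γ r : ℝ}
    {y : V} (hR : R < 1) (hβ : β ≤ 0) (hr : 0 < r) (hrR : 2 * r ≤ R) (hy1 : r ≤ ‖y‖)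
    (hy2 : ‖y‖ ≤ 2 * r) :
    min ((1 : ℝ) ^ α) (2 ^ α) * min ((2 : ℝ) ^ γ) (3 ^ γ) * r ^ α * r ^ γ *
        Real.log (1 / r) ^ β ≤
      truncatedPowLog R α β y * (r + ‖y‖) ^ γ := by
  have hy0 : 0 < ‖y‖ := hr.trans_le hy1
  have hL : 0 < Real.log (1 / r) := Real.log_pos (one_lt_one_div hr (by linarith))
  have hLy : 0 < Real.log (1 / ‖y‖) := Real.log_pos (one_lt_one_div hy0 (by linarith))
  have hlog : Real.log (1 / r) ^ β ≤ Real.log (1 / ‖y‖) ^ β :=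
    Real.rpow_le_rpow_of_nonpos hLy
      (Real.log_le_log (by positivity) (one_div_le_one_div_of_le hr hy1)) hβ
  have hnorm := min_rpow_mul_rpow_le_rpow (γ := α) one_pos hr (by linarith) hy2
  have hsum := min_rpow_mul_rpow_le_rpow (γ := γ) two_pos hr (by linarith)
    (by linarith : r + ‖y‖ ≤ 3 * r)
  rw [truncatedPowLog, if_pos (by linarith)]
  calc min ((1 : ℝ) ^ α) (2 ^ α) * min ((2 : ℝ) ^ γ) (3 ^ γ) * r ^ α * r ^ γ *
        Real.log (1 / r) ^ β
      = (min (1 ^ α) (2 ^ α) * r ^ α * Real.log (1 / r) ^ β) *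
          (min (2 ^ γ) (3 ^ γ) * r ^ γ) := by ring
    _ ≤ (‖y‖ ^ α * Real.log (1 / ‖y‖) ^ β) * (r + ‖y‖) ^ γ :=
      mul_le_mul (mul_le_mul hnorm hlog (Real.rpow_nonneg hL.le β) (by positivity)) hsum
        (by positivity) (mul_nonneg (by positivity) (Real.rpow_nonneg hLy.le β))

section Radial

variable {V : Type*} [NormedAddCommGroup V] [NormedSpace ℝ V] [MeasurableSpace V]
  [BorelSpace V] [FiniteDimensional ℝ V] (μ : Measure V) [μ.IsAddHaarMeasure]

theorem integrableOn_ball_norm_rpow_mul_log_rpow_iff [Nontrivial V] {r b : ℝ} (hr0 : 0 < r)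
    (hr1 : r < 1) :
    IntegrableOn (fun x : V => ‖x‖ ^ (-(finrank ℝ V : ℝ)) * Real.log (1 / ‖x‖) ^ b)
      (ball 0 r) μ ↔ b < -1 := by
  rw [integrableOn_fun_norm_addHaar μ
      (f := fun t => t ^ (-(finrank ℝ V : ℝ)) * Real.log (1 / t) ^ b),
    ← integrableOn_Ioo_inv_mul_log_one_div_rpow_iff hr0 hr1]
  refine integrableOn_congr_fun (fun y hy => ?_) measurableSet_Ioo
  rw [smul_eq_mul, ← mul_assoc, Real.pow_sub_one_mul_rpow_neg_natCast hy.1 finrank_pos]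

theorem addHaar_closedBall_sdiff_ball (x : V) {a b : ℝ} (ha : 0 < a) (hab : a ≤ b) :
    μ (closedBall x b \ ball x a) =
      ENNReal.ofReal (b ^ finrank ℝ V - a ^ finrank ℝ V) * μ (ball 0 1) := by
  rw [measure_sdiff (ball_subset_closedBall.trans (closedBall_subset_closedBall hab))
      measurableSet_ball.nullMeasurableSet measure_ball_lt_top.ne,
    Measure.addHaar_closedBall μ x (ha.le.trans hab), Measure.addHaar_ball_of_pos μ x ha,
    ← ENNReal.sub_mul (fun _ _ => measure_ball_lt_top.ne), ENNReal.ofReal_sub _ (by positivity)]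

theorem memLp_truncatedPowLog [Nontrivial V] {R p s : ℝ} (hR : R < 1) (hp : 0 < p)
    (hs : 1 < s) :
    MemLp (truncatedPowLog R (-(finrank ℝ V : ℝ) / p) (-s / p)) (ENNReal.ofReal p) μ := by
  obtain ⟨r, hRr, hr1⟩ := exists_between (max_lt hR zero_lt_one)
  rw [max_lt_iff] at hRr
  rw [← integrable_norm_rpow_iff (measurable_truncatedPowLog R _ _).aestronglyMeasurable
    (by simpa using hp) ofReal_ne_top, ENNReal.toReal_ofReal hp.le]
  have hnorm : (fun x : V => ‖truncatedPowLog R (-(finrank ℝ V : ℝ) / p) (-s / p) x‖ ^ p) =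
      (closedBall 0 R).indicator
        (fun x => ‖x‖ ^ (-(finrank ℝ V : ℝ)) * Real.log (1 / ‖x‖) ^ (-s)) := by
    ext x
    by_cases hx : ‖x‖ ≤ R
    · have hL := Real.log_one_div_nonneg (norm_nonneg x) (hx.trans hR.le)
      rw [indicator_of_mem (by simpa using hx), truncatedPowLog, if_pos hx,
        Real.norm_of_nonneg (by positivity), Real.mul_rpow (by positivity) (by positivity),
        ← Real.rpow_mul (norm_nonneg x), ← Real.rpow_mul hL, div_mul_cancel₀ _ hp.ne',
        div_mul_cancel₀ _ hp.ne']
    · rw [indicator_of_notMem (by simpa using hx), truncatedPowLog, if_neg hx, norm_zero,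
        Real.zero_rpow hp.ne']
  rw [hnorm, integrable_indicator_iff measurableSet_closedBall]
  exact ((integrableOn_ball_norm_rpow_mul_log_rpow_iff μ hRr.2 hr1).2 (by linarith)).mono_set
    (closedBall_subset_ball hRr.1)

theorem exists_pos_ofReal_le_lintegral_truncatedPowLog_mul [Nontrivial V] {R α β γ : ℝ}
    (hR : R < 1) (hβ : β ≤ 0) :
    ∃ c > 0, ∀ r : ℝ, 0 < r → 2 * r ≤ R →
      ENNReal.ofReal (c * r ^ ((finrank ℝ V : ℝ) + α + γ) * Real.log (1 / r) ^ β) ≤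
        ∫⁻ y, ENNReal.ofReal (truncatedPowLog R α β y) * ENNReal.ofReal ((r + ‖y‖) ^ γ) ∂μ := by
  set K := min ((1 : ℝ) ^ α) (2 ^ α) * min ((2 : ℝ) ^ γ) (3 ^ γ)
  have hball : 0 < μ.real (ball 0 1) :=
    ENNReal.toReal_pos (measure_ball_pos μ 0 one_pos).ne' measure_ball_lt_top.ne
  have hd : 0 < (2 : ℝ) ^ finrank ℝ V - 1 :=
    sub_pos.2 (one_lt_pow₀ (one_lt_two : (1 : ℝ) < 2) finrank_pos.ne')
  refine ⟨K * (2 ^ finrank ℝ V - 1) * μ.real (ball 0 1), by positivity, fun r hr hrR => ?_⟩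
  set B := K * r ^ α * r ^ γ * Real.log (1 / r) ^ β
  set A := closedBall (0 : V) (2 * r) \ ball 0 r
  have hshell : 0 ≤ (2 * r) ^ finrank ℝ V - r ^ finrank ℝ V :=
    sub_nonneg.2 (pow_le_pow_left₀ hr.le (by linarith) _)
  have hB : 0 ≤ B := mul_nonneg (by positivity)
    (Real.rpow_nonneg (Real.log_pos (one_lt_one_div hr (by linarith))).le β)
  calc ENNReal.ofReal (K * (2 ^ finrank ℝ V - 1) * μ.real (ball 0 1) *
          r ^ ((finrank ℝ V : ℝ) + α + γ) * Real.log (1 / r) ^ β)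
      = ENNReal.ofReal B * μ A := by
        rw [addHaar_closedBall_sdiff_ball μ 0 hr (by linarith), ← ofReal_measureReal,
          ← ENNReal.ofReal_mul hshell, ← ENNReal.ofReal_mul hB]
        congr 1
        rw [Real.rpow_add hr, Real.rpow_add hr, Real.rpow_natCast, mul_pow]
        ring
    _ = ∫⁻ _ in A, ENNReal.ofReal B ∂μ := (setLIntegral_const A _).symm
    _ ≤ ∫⁻ y in A,
          ENNReal.ofReal (truncatedPowLog R α β y) * ENNReal.ofReal ((r + ‖y‖) ^ γ) ∂μ := by
        refine setLIntegral_mono' (measurableSet_closedBall.diff measurableSet_ball) ?_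
        rintro y ⟨hy2, hy1⟩
        rw [mem_closedBall_zero_iff] at hy2
        rw [mem_ball_zero_iff, not_lt] at hy1
        rw [← ENNReal.ofReal_mul' (by positivity)]
        exact ENNReal.ofReal_le_ofReal
          (mul_rpow_mul_log_rpow_le_truncatedPowLog_mul hR hβ hr hrR hy1 hy2)
    _ ≤ _ := setLIntegral_le_lintegral _ _

theorem lintegral_rpow_eq_top_of_ofReal_le [Nontrivial V] {F : V → ℝ≥0∞} {c δ q b : ℝ}
    (hc : 0 < c) (hδ : 0 < δ) (hq : 0 < q) (hb : -1 ≤ b * q)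
    (hF : ∀ x : V, 0 < ‖x‖ → ‖x‖ ≤ δ →
      ENNReal.ofReal (c * ‖x‖ ^ (-(finrank ℝ V : ℝ) / q) * Real.log (1 / ‖x‖) ^ b) ≤ F x) :
    ∫⁻ x, F x ^ q ∂μ = ⊤ := by
  obtain ⟨r, hr0, hr1, hrδ⟩ : ∃ r : ℝ, 0 < r ∧ r < 1 ∧ r ≤ δ :=
    ⟨min δ (1 / 2), by positivity, (min_le_right _ _).trans_lt one_half_lt_one, min_le_left _ _⟩
  set g := fun x : V => ‖x‖ ^ (-(finrank ℝ V : ℝ)) * Real.log (1 / ‖x‖) ^ (b * q)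
  have hlog : ∀ x ∈ ball (0 : V) r, 0 ≤ Real.log (1 / ‖x‖) := fun x hx =>
    Real.log_one_div_nonneg (norm_nonneg x) ((mem_ball_zero_iff.1 hx).le.trans hr1.le)
  have hg_top : ∫⁻ x in ball 0 r, ENNReal.ofReal (g x) ∂μ = ⊤ := by
    by_contra h
    have hint := (lintegral_ofReal_ne_top_iff_integrable
      (by fun_prop : Measurable g).aestronglyMeasurable
      (ae_restrict_of_forall_mem measurableSet_ball fun x hx =>
        mul_nonneg (by positivity) (Real.rpow_nonneg (hlog x hx) _))).1 h
    linarith [(integrableOn_ball_norm_rpow_mul_log_rpow_iff μ hr0 hr1).1 hint]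
  have hle : ∀ x ∈ ball (0 : V) r, ENNReal.ofReal (c ^ q) * ENNReal.ofReal (g x) ≤ F x ^ q := by
    intro x hx
    rcases (norm_nonneg x).eq_or_lt with h0 | h0
    · have hg0 : g x = 0 := by
        simp only [g, ← h0, Real.zero_rpow (neg_ne_zero.2 (Nat.cast_ne_zero.2 finrank_pos.ne')),
          zero_mul]
      simp [hg0]
    rw [← ENNReal.ofReal_mul (by positivity), ← Real.mul_rpow_div_mul_rpow_rpow hc.le h0.le
      (hlog x hx) hq.ne', ← ENNReal.ofReal_rpow_of_nonneg
      (mul_nonneg (by positivity) (Real.rpow_nonneg (hlog x hx) _)) hq.le]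
    exact ENNReal.rpow_le_rpow (hF x h0 ((mem_ball_zero_iff.1 hx).le.trans hrδ)) hq.le
  refine top_le_iff.1 ?_
  calc ⊤ = ENNReal.ofReal (c ^ q) * ∫⁻ x in ball 0 r, ENNReal.ofReal (g x) ∂μ := by
        rw [hg_top, ENNReal.mul_top (by positivity)]
    _ = ∫⁻ x in ball 0 r, ENNReal.ofReal (c ^ q) * ENNReal.ofReal (g x) ∂μ :=
        (lintegral_const_mul _ (by fun_prop)).symm
    _ ≤ ∫⁻ x in ball 0 r, F x ^ q ∂μ := setLIntegral_mono' measurableSet_ball hle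
    _ ≤ ∫⁻ x, F x ^ q ∂μ := setLIntegral_le_lintegral _ _

end Radial

/-- The counterexample showing `q ≥ p` is necessary: for `0 < q < p < ∞`, `ε > 0`
with `q(1+ε)/p < 1` and `λ = n/p' + m/q`, the function
`f(y) = χ_{|y|≤1/2} |y|^{−n/p}(log 1/|y|)^{−(1+ε)/p}` lies in `L^p(ℝ^n)`,
satisfies `∫ f(y)(|x|+|y|)^{−λ} dy ≳ |x|^{−m/q}(log 1/|x|)^{−(1+ε)/p}` for small
`|x|`, and hence the `L^q(ℝ^m)` norm of `x ↦ ∫ f(y)(|x|+|y|)^{−λ} dy` is infinite. -/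
theorem stmt11 (n m : ℕ) (hn : 0 < n) (hm : 0 < m) (p q ε lam : ℝ)
    (hq0 : 0 < q) (hqp : q < p) (hε : 0 < ε) (hqεp : q * (1 + ε) / p < 1)
    (hhom : lam = n * (1 - 1/p) + m / q)
    (f : E n → ℝ)
    (hfdef : ∀ y, f y = if ‖y‖ ≤ 1/2 then
        ‖y‖ ^ (-(n : ℝ)/p) * Real.log (1/‖y‖) ^ (-(1+ε)/p) else 0)
    (F : E m → ℝ≥0∞)
    (hFdef : ∀ x, F x = ∫⁻ y : E n,
        ENNReal.ofReal (f y) * ENNReal.ofReal ((‖x‖ + ‖y‖) ^ (-lam)) ∂volume) :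
    MemLp f (ENNReal.ofReal p) volume ∧
    (∃ c : ℝ, 0 < c ∧ ∃ δ : ℝ, 0 < δ ∧ ∀ x : E m, 0 < ‖x‖ → ‖x‖ ≤ δ →
      ENNReal.ofReal (c * ‖x‖ ^ (-(m : ℝ)/q) * Real.log (1/‖x‖) ^ (-(1+ε)/p)) ≤ F x) ∧
    ∫⁻ x : E m, F x ^ q ∂volume = ⊤ := by
  have hp : 0 < p := hq0.trans hqp
  have : NeZero n := ⟨hn.ne'⟩
  have : NeZero m := ⟨hm.ne'⟩
  obtain rfl : f = truncatedPowLog (1 / 2) (-(n : ℝ) / p) (-(1 + ε) / p) := funext hfdef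
  have hmemLp := memLp_truncatedPowLog (volume : Measure (E n)) one_half_lt_one hp
    (lt_add_of_pos_right 1 hε)
  obtain ⟨c, hc, hlow⟩ := exists_pos_ofReal_le_lintegral_truncatedPowLog_mul
    (volume : Measure (E n)) (γ := -lam) one_half_lt_one
    (div_nonpos_of_nonpos_of_nonneg (by linarith : -(1 + ε) ≤ 0) hp.le)
  have hexp : (n : ℝ) + -(n : ℝ) / p + -lam = -(m : ℝ) / q := by
    rw [hhom]; field_simp; ring
  rw [finrank_euclideanSpace_fin] at hmemLp hlow
  have hF : ∀ x : E m, 0 < ‖x‖ → ‖x‖ ≤ 1 / 4 →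
      ENNReal.ofReal (c * ‖x‖ ^ (-(m : ℝ) / q) * Real.log (1 / ‖x‖) ^ (-(1 + ε) / p)) ≤ F x :=
    fun x hx0 hx => by
      rw [hFdef, ← hexp]
      exact hlow ‖x‖ hx0 (by linarith)
  refine ⟨hmemLp, ⟨c, hc, 1 / 4, by norm_num, hF⟩, ?_⟩
  refine lintegral_rpow_eq_top_of_ofReal_le volume hc (by norm_num : (0 : ℝ) < 1 / 4) hq0 ?_
    (by rwa [finrank_euclideanSpace_fin])
  rw [div_mul_eq_mul_div, neg_mul, neg_div, neg_le_neg_iff, mul_comm]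
  exact hqεp.le
end

section
/- Suppose the bilinear operator I_{λ,D}(f₁,f₂)(x) = ∫_{ℝ^{n₁+n₂}} f₁(y₁)f₂(y₂)(|D₁x−y₁|+|D₂x−y₂|)^{−λ} dy₁dy₂ satisfies ‖I_{λ,D}(f₁,f₂)‖_{L^q(ℝ^m)} ≲ ‖f₁‖_{L^{p₁}}‖f₂‖_{L^{p₂}} for some 0 < p₁, p₂, q ≤ ∞ and 0 < λ < n₁+n₂, with the estimate not identically trivial. Then λ = n₁/p₁' + n₂/p₂' + m/q. -/
open MeasureTheory ENNReal

/-!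
Dilating both inputs, `f ↦ f (a⁻¹ • ·)`, rescales the operator:
`I (f₁ (a⁻¹ • ·)) (f₂ (a⁻¹ • ·)) x = a ^ (n₁ + n₂ - λ) * I f₁ f₂ (a⁻¹ • x)`.
Hence the left side of the bound scales like `a ^ (n₁ + n₂ - λ + m / q)` and the right side
like `a ^ (n₁ / p₁ + n₂ / p₂)`; a nonzero left side and a finite right side can only satisfy
such an inequality for every `a > 0` if the two exponents agree.
-/

open Module Filter Topology

lemma qnorm_eq_eLpNorm {α : Type*} [MeasurableSpace α] (μ : Measure α) (q : ℝ≥0∞)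
    (F : α → ℝ≥0∞) : qnorm μ q F = eLpNorm F q μ := by
  unfold qnorm
  split_ifs with h0 htop
  · simp [h0]
  · simp [htop, eLpNormEssSup]
  · simp [eLpNorm_eq_lintegral_rpow_enorm_toReal h0 htop]

lemma eLpNorm_const_mul_of_ne_top {α : Type*} [MeasurableSpace α] (μ : Measure α) {c : ℝ≥0∞}
    (hc : c ≠ ∞) (F : α → ℝ≥0∞) (p : ℝ≥0∞) :
    eLpNorm (fun x => c * F x) p μ = c * eLpNorm F p μ := by
  rcases eq_or_ne p 0 with rfl | h0
  · simp
  rcases eq_or_ne p ∞ with rfl | htop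
  · simp [eLpNormEssSup, essSup_const_mul]
  have hp := ENNReal.toReal_pos h0 htop
  simp only [eLpNorm_eq_lintegral_rpow_enorm_toReal h0 htop, enorm_eq_self,
    ENNReal.mul_rpow_of_nonneg _ _ hp.le]
  rw [lintegral_const_mul' _ _ (ENNReal.rpow_ne_top_of_nonneg hp.le hc),
    ENNReal.mul_rpow_of_nonneg _ _ (by positivity), ← ENNReal.rpow_mul,
    mul_one_div_cancel hp.ne', ENNReal.rpow_one]

section Dilation

variable {F : Type*} [NormedAddCommGroup F] [NormedSpace ℝ F] [MeasurableSpace F] [BorelSpace F]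
  [FiniteDimensional ℝ F] (μ : Measure F) [μ.IsAddHaarMeasure] {a : ℝ}

lemma map_inv_smul_addHaar (ha : 0 < a) :
    μ.map (a⁻¹ • ·) = ENNReal.ofReal (a ^ finrank ℝ F) • μ := by
  rw [Measure.map_addHaar_smul μ (inv_ne_zero ha.ne'), inv_pow, inv_inv,
    abs_of_pos (by positivity)]

lemma lintegral_eq_mul_lintegral_comp_smul (ha : 0 < a) (g : F → ℝ≥0∞) :
    ∫⁻ y, g y ∂μ = ENNReal.ofReal (a ^ finrank ℝ F) * ∫⁻ z, g (a • z) ∂μ := by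
  rw [← smul_eq_mul, ← lintegral_smul_measure, ← map_inv_smul_addHaar μ ha,
    ← MeasurableEquiv.coe_smul₀ (α := F) (inv_ne_zero ha.ne'), lintegral_map_equiv]
  simp [smul_smul, mul_inv_cancel₀ ha.ne']

variable {ε : Type*} [TopologicalSpace ε] [ContinuousENorm ε]

lemma eLpNorm_comp_inv_smul (ha : 0 < a) (f : F → ε) (p : ℝ≥0∞) :
    eLpNorm (fun x => f (a⁻¹ • x)) p μ
      = ENNReal.ofReal (a ^ ((finrank ℝ F : ℝ) * (1 / p).toReal)) * eLpNorm f p μ := by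
  rw [Real.rpow_natCast_mul ha.le, ← ENNReal.ofReal_rpow_of_nonneg (by positivity) (by positivity),
    ← smul_eq_mul, ← eLpNorm_smul_measure_of_ne_zero (by simp [ha]), ← map_inv_smul_addHaar μ ha,
    ← MeasurableEquiv.coe_smul₀ (α := F) (inv_ne_zero ha.ne'),
    MeasurableEquiv.measurableEmbedding _ |>.eLpNorm_map_measure]
  rfl

lemma MeasureTheory.MemLp.comp_inv_smul (ha : 0 < a) {f : F → ε} {p : ℝ≥0∞} (hf : MemLp f p μ) :
    MemLp (fun x => f (a⁻¹ • x)) p μ :=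
  (MeasurableEquiv.smul₀ a⁻¹ (inv_ne_zero ha.ne')).memLp_map_measure_iff.1 <| by
    rw [MeasurableEquiv.coe_smul₀, map_inv_smul_addHaar μ ha]
    exact hf.smul_measure ENNReal.ofReal_ne_top

end Dilation

lemma LinearMap.norm_apply_sub_smul {F G : Type*} [NormedAddCommGroup F] [NormedSpace ℝ F]
    [AddCommGroup G] [Module ℝ G] (A : G →ₗ[ℝ] F) {a : ℝ} (ha : 0 < a) (x : G) (z : F) :
    ‖A x - a • z‖ = a * ‖A (a⁻¹ • x) - z‖ := by
  calc ‖A x - a • z‖ = ‖a • (A (a⁻¹ • x) - z)‖ := by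
        rw [smul_sub, ← map_smul, smul_smul, mul_inv_cancel₀ ha.ne', one_smul]
    _ = a * ‖A (a⁻¹ • x) - z‖ := by rw [norm_smul, Real.norm_of_nonneg ha.le]

section FractionalIntegral

variable {F₁ F₂ G : Type*}
  [NormedAddCommGroup F₁] [NormedSpace ℝ F₁] [MeasurableSpace F₁] [BorelSpace F₁]
  [FiniteDimensional ℝ F₁] (μ₁ : Measure F₁) [μ₁.IsAddHaarMeasure]
  [NormedAddCommGroup F₂] [NormedSpace ℝ F₂] [MeasurableSpace F₂] [BorelSpace F₂]
  [FiniteDimensional ℝ F₂] (μ₂ : Measure F₂) [μ₂.IsAddHaarMeasure]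
  [AddCommGroup G] [Module ℝ G] (A₁ : G →ₗ[ℝ] F₁) (A₂ : G →ₗ[ℝ] F₂) (lam : ℝ)

/-- The operator `I_{λ,D}`, with `x ↦ Dᵢ x` generalised to linear maps `Aᵢ`. -/
noncomputable def bilinFracIntegral (f₁ : F₁ → ℝ) (f₂ : F₂ → ℝ) (x : G) : ℝ≥0∞ :=
  ∫⁻ y₁, ∫⁻ y₂, ENNReal.ofReal |f₁ y₁| * ENNReal.ofReal |f₂ y₂| *
    ENNReal.ofReal ((‖A₁ x - y₁‖ + ‖A₂ x - y₂‖) ^ (-lam)) ∂μ₂ ∂μ₁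

lemma bilinFracIntegral_comp_inv_smul {a : ℝ} (ha : 0 < a) (f₁ : F₁ → ℝ) (f₂ : F₂ → ℝ) (x : G) :
    bilinFracIntegral μ₁ μ₂ A₁ A₂ lam (fun y => f₁ (a⁻¹ • y)) (fun y => f₂ (a⁻¹ • y)) x
      = ENNReal.ofReal (a ^ ((finrank ℝ F₁ : ℝ) + finrank ℝ F₂ - lam))
        * bilinFracIntegral μ₁ μ₂ A₁ A₂ lam f₁ f₂ (a⁻¹ • x) := by
  have kernel : ∀ (z₁ : F₁) (z₂ : F₂),
      ENNReal.ofReal ((‖A₁ x - a • z₁‖ + ‖A₂ x - a • z₂‖) ^ (-lam))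
        = ENNReal.ofReal (a ^ (-lam))
          * ENNReal.ofReal ((‖A₁ (a⁻¹ • x) - z₁‖ + ‖A₂ (a⁻¹ • x) - z₂‖) ^ (-lam)) := by
    intro z₁ z₂
    rw [A₁.norm_apply_sub_smul ha, A₂.norm_apply_sub_smul ha, ← mul_add,
      Real.mul_rpow ha.le (by positivity), ENNReal.ofReal_mul (by positivity)]
  have scale : ENNReal.ofReal (a ^ ((finrank ℝ F₁ : ℝ) + finrank ℝ F₂ - lam))
      = ENNReal.ofReal (a ^ finrank ℝ F₁) * ENNReal.ofReal (a ^ finrank ℝ F₂)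
        * ENNReal.ofReal (a ^ (-lam)) := by
    rw [sub_eq_add_neg, Real.rpow_add ha, Real.rpow_add ha, Real.rpow_natCast, Real.rpow_natCast,
      ENNReal.ofReal_mul (by positivity), ENNReal.ofReal_mul (by positivity)]
  unfold bilinFracIntegral
  rw [scale, lintegral_eq_mul_lintegral_comp_smul μ₁ ha, mul_assoc, mul_assoc]
  congr 1
  rw [← lintegral_const_mul' _ _ ENNReal.ofReal_ne_top,
    ← lintegral_const_mul' _ _ ENNReal.ofReal_ne_top]
  refine lintegral_congr fun z₁ => ?_
  rw [lintegral_eq_mul_lintegral_comp_smul μ₂ ha]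
  congr 1
  rw [← lintegral_const_mul' _ _ ENNReal.ofReal_ne_top]
  refine lintegral_congr fun z₂ => ?_
  simp only [smul_smul, inv_mul_cancel₀ ha.ne', one_smul, kernel]
  ring

end FractionalIntegral

lemma ENNReal.eq_zero_of_forall_le_ofReal_mul {K M : ℝ≥0∞} (hM : M ≠ ∞)
    (h : ∀ δ : ℝ, 0 < δ → K ≤ ENNReal.ofReal δ * M) : K = 0 := by
  have hlim : Tendsto (fun δ : ℝ => ENNReal.ofReal δ * M) (𝓝 0) (𝓝 (ENNReal.ofReal 0 * M)) :=
    ENNReal.Tendsto.mul_const (ENNReal.tendsto_ofReal tendsto_id) (.inr hM)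
  rw [ENNReal.ofReal_zero, zero_mul] at hlim
  exact nonpos_iff_eq_zero.1 <| ge_of_tendsto (hlim.mono_left nhdsWithin_le_nhds) <|
    eventually_nhdsWithin_of_forall (s := Set.Ioi 0) fun δ hδ => h δ hδ

lemma eq_of_forall_rpow_mul_le {K M : ℝ≥0∞} (hK : K ≠ 0) (hM : M ≠ ∞) {s t : ℝ}
    (h : ∀ a : ℝ, 0 < a → ENNReal.ofReal (a ^ s) * K ≤ ENNReal.ofReal (a ^ t) * M) : s = t := by
  by_contra hst
  refine hK (ENNReal.eq_zero_of_forall_le_ofReal_mul hM fun δ hδ => ?_)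
  -- the dilation factor `a = δ ^ (1 / (t - s))` makes the two sides differ by exactly `δ`
  set a := δ ^ (t - s)⁻¹
  have ha : 0 < a := Real.rpow_pos_of_pos hδ _
  have hat : a ^ t = a ^ s * δ := by
    have had : a ^ (t - s) = δ := by
      rw [← Real.rpow_mul hδ.le, inv_mul_cancel₀ (sub_ne_zero.2 (Ne.symm hst)), Real.rpow_one]
    rw [← had, ← Real.rpow_add ha, add_sub_cancel]
  have hpos : ENNReal.ofReal (a ^ s) ≠ 0 := by simp [Real.rpow_pos_of_pos ha]
  rw [← ENNReal.mul_le_mul_iff_right hpos ENNReal.ofReal_ne_top, ← mul_assoc,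
    ← ENNReal.ofReal_mul (by positivity), ← hat]
  exact h a ha

theorem stmt12_general (n₁ n₂ m : ℕ)
    (lam : ℝ) (p₁ p₂ q : ℝ≥0∞)
    (D₁ : Matrix (Fin n₁) (Fin m) ℝ) (D₂ : Matrix (Fin n₂) (Fin m) ℝ) (C : ℝ)
    (I : (E n₁ → ℝ) → (E n₂ → ℝ) → E m → ℝ≥0∞)
    (hI : ∀ f₁ f₂ x, I f₁ f₂ x = ∫⁻ y₁ : E n₁, ∫⁻ y₂ : E n₂,
        ENNReal.ofReal |f₁ y₁| * ENNReal.ofReal |f₂ y₂| *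
        ENNReal.ofReal ((‖mvec D₁ x - y₁‖ + ‖mvec D₂ x - y₂‖) ^ (-lam)) ∂volume ∂volume)
    (hbound : ∀ f₁ f₂, MemLp f₁ p₁ volume → MemLp f₂ p₂ volume →
      qnorm volume q (I f₁ f₂) ≤ ENNReal.ofReal C * eLpNorm f₁ p₁ volume * eLpNorm f₂ p₂ volume)
    (hnontriv : ∃ f₁ f₂, MemLp f₁ p₁ volume ∧ MemLp f₂ p₂ volume ∧
      qnorm volume q (I f₁ f₂) ≠ 0) :
    lam = n₁ * (1 - (1/p₁).toReal) + n₂ * (1 - (1/p₂).toReal) + m * (1/q).toReal := by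
  obtain ⟨f₁, f₂, hf₁, hf₂, hI₀⟩ := hnontriv
  obtain rfl : I = bilinFracIntegral volume volume
      (Matrix.toEuclideanLin D₁) (Matrix.toEuclideanLin D₂) lam :=
    funext fun f₁ => funext fun f₂ => funext (hI f₁ f₂)
  simp only [qnorm_eq_eLpNorm] at hbound hI₀
  have hM : ENNReal.ofReal C * eLpNorm f₁ p₁ volume * eLpNorm f₂ p₂ volume ≠ ∞ :=
    ENNReal.mul_ne_top (ENNReal.mul_ne_top ENNReal.ofReal_ne_top hf₁.eLpNorm_ne_top)
      hf₂.eLpNorm_ne_top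
  suffices (n₁ + n₂ - lam) + m * (1/q).toReal = n₁ * (1/p₁).toReal + n₂ * (1/p₂).toReal by
    linarith
  refine eq_of_forall_rpow_mul_le hI₀ hM fun a ha => ?_
  have h := hbound _ _ (hf₁.comp_inv_smul volume ha) (hf₂.comp_inv_smul volume ha)
  simp only [funext (bilinFracIntegral_comp_inv_smul volume volume _ _ lam ha f₁ f₂),
    eLpNorm_const_mul_of_ne_top _ ENNReal.ofReal_ne_top, eLpNorm_comp_inv_smul _ ha,
    finrank_euclideanSpace_fin] at h
  calc ENNReal.ofReal (a ^ ((n₁ + n₂ - lam) + m * (1/q).toReal)) * _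
      = _ := by rw [Real.rpow_add ha, ENNReal.ofReal_mul (by positivity), mul_assoc]
    _ ≤ _ := h
    _ = _ := by rw [Real.rpow_add ha, ENNReal.ofReal_mul (by positivity)]; ring

/-- Necessity of the homogeneity condition: if the bilinear fractional integral
`I_{λ,D}` is bounded from `L^{p₁} × L^{p₂}` to `L^q` and is not identically
trivial, then `λ = n₁/p₁' + n₂/p₂' + m/q`. -/
theorem stmt12 (n₁ n₂ m : ℕ) (hn₁ : 0 < n₁) (hn₂ : 0 < n₂) (hm : 0 < m)
    (lam : ℝ) (p₁ p₂ q : ℝ≥0∞) (hp₁ : 0 < p₁) (hp₂ : 0 < p₂) (hq : 0 < q)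
    (hlam0 : 0 < lam) (hlamn : lam < n₁ + n₂)
    (D₁ : Matrix (Fin n₁) (Fin m) ℝ) (D₂ : Matrix (Fin n₂) (Fin m) ℝ) (C : ℝ)
    (I : (E n₁ → ℝ) → (E n₂ → ℝ) → E m → ℝ≥0∞)
    (hI : ∀ f₁ f₂ x, I f₁ f₂ x = ∫⁻ y₁ : E n₁, ∫⁻ y₂ : E n₂,
        ENNReal.ofReal |f₁ y₁| * ENNReal.ofReal |f₂ y₂| *
        ENNReal.ofReal ((‖mvec D₁ x - y₁‖ + ‖mvec D₂ x - y₂‖) ^ (-lam)) ∂volume ∂volume)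
    (hbound : ∀ f₁ f₂, MemLp f₁ p₁ volume → MemLp f₂ p₂ volume →
      qnorm volume q (I f₁ f₂) ≤ ENNReal.ofReal C * eLpNorm f₁ p₁ volume * eLpNorm f₂ p₂ volume)
    (hnontriv : ∃ f₁ f₂, MemLp f₁ p₁ volume ∧ MemLp f₂ p₂ volume ∧
      qnorm volume q (I f₁ f₂) ≠ 0) :
    lam = n₁ * (1 - (1/p₁).toReal) + n₂ * (1 - (1/p₂).toReal) + m * (1/q).toReal :=
  stmt12_general n₁ n₂ m lam p₁ p₂ q D₁ D₂ C I hI hbound hnontriv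
end

section
/- Let 0 < λ < n₁ + n₂ with λ = m/q and 0 < q < ∞ (corresponding to p₁ = p₂ = 1). Set f_i = χ_{\{|y_i| ≤ 1\}} on ℝ^{n_i}. Then for all x ∈ ℝ^m, ∫_{ℝ^{n₁+n₂}} f₁(y₁)f₂(y₂)(|D₁x−y₁|+|D₂x−y₂|)^{−λ} dy₁dy₂ ≳ (1+|x|)^{−λ}, and hence this function is not in L^q(ℝ^m). Consequently I_{λ,D} is never bounded from L¹(ℝ^{n₁}) × L¹(ℝ^{n₂}) to L^q(ℝ^m). -/
/-!
For `y₁, y₂` in the unit balls, `‖a - y₁‖ + ‖b - y₂‖ ≤ ‖a‖ + ‖b‖ + 2 ≤ C (1 + ‖x‖)` when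
`a = D₁ x`, `b = D₂ x`, so the integral is at least a constant times `(1 + ‖x‖) ^ (-λ)`. This
needs the integrand to be integrable (a Bochner integral of a non-integrable function is `0`):
it is dominated by `‖y - (a, b)‖ ^ (-λ)` near `(a, b)`, locally integrable on
`ℝ^{n₁} × ℝ^{n₂}` since `λ < n₁ + n₂`. As `λ q = m`, the `q`-th power of `(1 + ‖x‖) ^ (-λ)` is
`(1 + ‖x‖) ^ (-m)`, whose integral over `ℝ^m` is, in polar coordinates, comparable to
`∫^∞ dr / r = ∞`. Characteristic functions of unit balls lie in `L¹`, so no bound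
`L¹ × L¹ → L^q` can hold.
-/

open MeasureTheory ENNReal

open Metric Set Module

section Radial

variable {V : Type*} [NormedAddCommGroup V] [NormedSpace ℝ V] [FiniteDimensional ℝ V]
  [MeasurableSpace V] [BorelSpace V] (μ : Measure V) [μ.IsAddHaarMeasure]

theorem not_integrable_one_add_norm_rpow_neg_finrank [Nontrivial V] :
    ¬ Integrable (fun x : V => (1 + ‖x‖) ^ (-(finrank ℝ V : ℝ))) μ := by
  set d := finrank ℝ V
  have hd : 0 < d := finrank_pos
  rw [integrable_fun_norm_addHaar μ (f := fun y => (1 + y) ^ (-(d : ℝ)))]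
  intro hint
  refine not_integrableOn_Ioi_inv (a := (1 : ℝ)) <|
    ((hint.mono_set (Ioi_subset_Ioi zero_le_one)).const_mul (2 ^ d)).mono' (by fun_prop) ?_
  filter_upwards [ae_restrict_mem measurableSet_Ioi] with y (hy : 1 < y)
  have hy0 : 0 < y := zero_lt_one.trans hy
  have hpow : (1 + y) ^ d ≤ (2 * y) ^ d := pow_le_pow_left₀ (by positivity) (by linarith) d
  rw [Real.norm_of_nonneg (inv_nonneg.2 hy0.le), smul_eq_mul, Real.rpow_neg (by positivity),
    Real.rpow_natCast]
  calc y⁻¹ ≤ (2 * y) ^ d / (1 + y) ^ d * y⁻¹ :=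
        le_mul_of_one_le_left (by positivity) ((one_le_div (by positivity)).2 hpow)
    _ = 2 ^ d * (y ^ (d - 1) * ((1 + y) ^ d)⁻¹) := by
        rw [mul_pow, ← pow_sub_one_mul hd.ne' y]; field_simp

theorem eLpNorm_one_add_norm_rpow_neg_eq_top [Nontrivial V] {q : ℝ} (hq : 0 < q) :
    eLpNorm (fun x : V => (1 + ‖x‖) ^ (-(finrank ℝ V / q))) (ENNReal.ofReal q) μ = ⊤ := by
  by_contra hfin
  have hmem : MemLp (fun x : V => (1 + ‖x‖) ^ (-(finrank ℝ V / q))) (ENNReal.ofReal q) μ :=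
    ⟨(by fun_prop : Measurable _).aestronglyMeasurable, lt_top_iff_ne_top.2 hfin⟩
  refine not_integrable_one_add_norm_rpow_neg_finrank μ <|
    (hmem.integrable_norm_rpow (by simpa using hq) ofReal_ne_top).congr (ae_of_all _ fun x => ?_)
  have hx : 0 < 1 + ‖x‖ := by positivity
  dsimp only
  rw [toReal_ofReal hq.le, Real.norm_of_nonneg (by positivity), ← Real.rpow_mul hx.le]
  congr 1
  field_simp

end Radial

section Kernel

variable {V W : Type*} [NormedAddCommGroup V] [NormedAddCommGroup W]

noncomputable def unitBallKernel (lam : ℝ) (a : V) (b : W) (y : V × W) : ℝ :=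
  (if ‖y.1‖ ≤ 1 then 1 else 0) * (if ‖y.2‖ ≤ 1 then 1 else 0) * (‖a - y.1‖ + ‖b - y.2‖) ^ (-lam)

theorem unitBallKernel_eq_indicator (lam : ℝ) (a : V) (b : W) :
    unitBallKernel lam a b =
      (closedBall 0 1).indicator fun y => (‖a - y.1‖ + ‖b - y.2‖) ^ (-lam) := by
  ext y
  by_cases h₁ : ‖y.1‖ ≤ 1 <;> by_cases h₂ : ‖y.2‖ ≤ 1 <;>
    simp [unitBallKernel, Prod.norm_def, h₁, h₂]

theorem unitBallKernel_nonneg (lam : ℝ) (a : V) (b : W) (y : V × W) :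
    0 ≤ unitBallKernel lam a b y := by
  rw [unitBallKernel_eq_indicator]
  exact indicator_nonneg (fun _ _ => by positivity) y

theorem norm_sub_mk_le_add (a : V) (b : W) (y : V × W) :
    ‖y - (a, b)‖ ≤ ‖a - y.1‖ + ‖b - y.2‖ := by
  rw [Prod.norm_def, norm_sub_rev a, norm_sub_rev b]
  exact max_le (le_add_of_nonneg_right (norm_nonneg _)) (le_add_of_nonneg_left (norm_nonneg _))

theorem unitBallKernel_le {lam : ℝ} (hlam : 0 ≤ lam) {a : V} {b : W} {y : V × W}
    (hy : y ≠ (a, b)) :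
    unitBallKernel lam a b y ≤
      (closedBall 0 (1 + ‖(a, b)‖)).indicator (fun z => ‖z‖ ^ (-lam)) (y - (a, b)) := by
  rw [unitBallKernel_eq_indicator]
  by_cases hy₁ : y ∈ closedBall 0 1
  · have hmem : y - (a, b) ∈ closedBall 0 (1 + ‖(a, b)‖) := by
      rw [mem_closedBall_zero_iff] at hy₁ ⊢
      exact (norm_sub_le _ _).trans (by linarith)
    rw [indicator_of_mem hy₁, indicator_of_mem hmem]
    exact Real.rpow_le_rpow_of_nonpos (norm_pos_iff.2 (sub_ne_zero.2 hy))
      (norm_sub_mk_le_add a b y) (neg_nonpos.2 hlam)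
  · rw [indicator_of_notMem hy₁]
    exact indicator_nonneg (fun z _ => by positivity) _

-- Since `0 ^ (-lam) = 0` in Lean, the kernel vanishes at `y = (a, b)`.
theorem le_unitBallKernel {lam : ℝ} (hlam : 0 ≤ lam) {a : V} {b : W} {y : V × W}
    (hy : y ≠ (a, b)) :
    (closedBall 0 1).indicator (fun _ => (‖a‖ + ‖b‖ + 2) ^ (-lam)) y ≤
      unitBallKernel lam a b y := by
  rw [unitBallKernel_eq_indicator]
  refine indicator_le_indicator' fun hy₁ => ?_
  rw [mem_closedBall_zero_iff] at hy₁
  have h₁ : ‖a - y.1‖ ≤ ‖a‖ + 1 := (norm_sub_le _ _).trans (by linarith [norm_fst_le y])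
  have h₂ : ‖b - y.2‖ ≤ ‖b‖ + 1 := (norm_sub_le _ _).trans (by linarith [norm_snd_le y])
  have hpos : 0 < ‖a - y.1‖ + ‖b - y.2‖ :=
    (norm_pos_iff.2 (sub_ne_zero.2 hy)).trans_le (norm_sub_mk_le_add a b y)
  exact Real.rpow_le_rpow_of_nonpos hpos (by linarith) (neg_nonpos.2 hlam)

variable [MeasurableSpace V] [BorelSpace V] [MeasurableSpace W] [BorelSpace W]

theorem measurable_unitBallKernel (lam : ℝ) (a : V) (b : W) :
    Measurable (unitBallKernel lam a b) := by
  unfold unitBallKernel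
  refine .mul (.mul ?_ ?_) (by fun_prop) <;>
    exact .ite (measurableSet_le (by fun_prop) measurable_const) measurable_const measurable_const

variable [NormedSpace ℝ V] [FiniteDimensional ℝ V] [NormedSpace ℝ W] [FiniteDimensional ℝ W]
  (μ : Measure V) [μ.IsAddHaarMeasure] (ν : Measure W) [ν.IsAddHaarMeasure]

theorem ae_prod_ne (hdim : 0 < finrank ℝ V + finrank ℝ W) (c : V × W) :
    ∀ᵐ y ∂μ.prod ν, y ≠ c := by
  have : Nontrivial (V × W) := Module.nontrivial_of_finrank_pos (R := ℝ) <| by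
    rwa [finrank_prod]
  have := Measure.prod.instIsAddHaarMeasure μ ν
  exact Measure.ae_ne _ c

theorem integrable_unitBallKernel {lam : ℝ} (hlam0 : 0 < lam)
    (hlam : lam < finrank ℝ V + finrank ℝ W) (a : V) (b : W) :
    Integrable (unitBallKernel lam a b) (μ.prod ν) := by
  have hdim : lam < finrank ℝ (V × W) := by rw [finrank_prod]; exact_mod_cast hlam
  have hloc : LocallyIntegrable (fun z : V × W => ‖z‖ ^ (-lam)) (μ.prod ν) :=
    locallyIntegrable_of_norm_le_rpow (C := 1) (by exact_mod_cast hlam0.trans hdim) hdim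
      (ae_of_all _ fun z => by simp [abs_of_nonneg (Real.rpow_nonneg (norm_nonneg z) _)])
      (by fun_prop : Measurable _).aestronglyMeasurable
  have hdom : Integrable
      ((closedBall 0 (1 + ‖(a, b)‖)).indicator fun z : V × W => ‖z‖ ^ (-lam)) (μ.prod ν) :=
    (integrable_indicator_iff measurableSet_closedBall).2
      (hloc.integrableOn_isCompact (isCompact_closedBall _ _))
  refine (hdom.comp_sub_right (a, b)).mono' ?_ ?_
  · exact (measurable_unitBallKernel lam a b).aestronglyMeasurable
  · filter_upwards [ae_prod_ne μ ν (by exact_mod_cast hlam0.trans hlam) (a, b)] with y hy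
    rw [Real.norm_of_nonneg (unitBallKernel_nonneg lam a b y)]
    exact unitBallKernel_le hlam0.le hy

theorem le_integral_unitBallKernel {lam : ℝ} (hlam0 : 0 < lam)
    (hlam : lam < finrank ℝ V + finrank ℝ W) (a : V) (b : W) :
    μ.real (closedBall 0 1) * ν.real (closedBall 0 1) * (‖a‖ + ‖b‖ + 2) ^ (-lam) ≤
      ∫ y₁, ∫ y₂, unitBallKernel lam a b (y₁, y₂) ∂ν ∂μ := by
  rw [← integral_prod _ (integrable_unitBallKernel μ ν hlam0 hlam a b), ← measureReal_prod_prod,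
    closedBall_prod_same, Prod.mk_zero_zero, ← smul_eq_mul,
    ← integral_indicator_const _ measurableSet_closedBall]
  refine integral_mono_ae ?_ (integrable_unitBallKernel μ ν hlam0 hlam a b) ?_
  · exact (integrable_indicator_iff measurableSet_closedBall).2
      (integrableOn_const measure_closedBall_lt_top.ne)
  · filter_upwards [ae_prod_ne μ ν (by exact_mod_cast hlam0.trans hlam) (a, b)] with y hy
    exact le_unitBallKernel hlam0.le hy

end Kernel

theorem exists_mul_one_add_norm_rpow_le_integral_unitBallKernel {X V W : Type*}
    [NormedAddCommGroup X] [NormedSpace ℝ X]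
    [NormedAddCommGroup V] [NormedSpace ℝ V] [FiniteDimensional ℝ V] [MeasurableSpace V]
    [BorelSpace V] [NormedAddCommGroup W] [NormedSpace ℝ W] [FiniteDimensional ℝ W]
    [MeasurableSpace W] [BorelSpace W]
    (μ : Measure V) [μ.IsAddHaarMeasure] (ν : Measure W) [ν.IsAddHaarMeasure]
    {lam : ℝ} (hlam0 : 0 < lam) (hlam : lam < finrank ℝ V + finrank ℝ W)
    (L₁ : X →L[ℝ] V) (L₂ : X →L[ℝ] W) :
    ∃ c : ℝ, 0 < c ∧ ∀ x : X, c * (1 + ‖x‖) ^ (-lam) ≤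
      ∫ y₁, ∫ y₂, unitBallKernel lam (L₁ x) (L₂ x) (y₁, y₂) ∂ν ∂μ := by
  set M := ‖L₁‖ + ‖L₂‖ + 2
  have hM : 0 < M := by positivity
  refine ⟨μ.real (closedBall 0 1) * ν.real (closedBall 0 1) * M ^ (-lam), ?_, fun x => ?_⟩
  · have h₁ : 0 < μ.real (closedBall 0 1) :=
      toReal_pos (measure_closedBall_pos μ 0 one_pos).ne' measure_closedBall_lt_top.ne
    have h₂ : 0 < ν.real (closedBall 0 1) :=
      toReal_pos (measure_closedBall_pos ν 0 one_pos).ne' measure_closedBall_lt_top.ne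
    positivity
  · refine le_trans ?_ (le_integral_unitBallKernel μ ν hlam0 hlam (L₁ x) (L₂ x))
    have hnorm : ‖L₁ x‖ + ‖L₂ x‖ + 2 ≤ M * (1 + ‖x‖) := by
      nlinarith [L₁.le_opNorm x, L₂.le_opNorm x, norm_nonneg x, norm_nonneg L₁, norm_nonneg L₂]
    rw [mul_assoc, ← Real.mul_rpow hM.le (by positivity)]
    exact mul_le_mul_of_nonneg_left
      (Real.rpow_le_rpow_of_nonpos (by positivity) hnorm (neg_nonpos.2 hlam0.le)) (by positivity)

theorem eLpNorm_eq_top_of_const_mul_le {α : Type*} [MeasurableSpace α] {μ : Measure α}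
    {p : ℝ≥0∞} {f g : α → ℝ} {c : ℝ} (hc : 0 < c) (hg : 0 ≤ g) (hgf : ∀ x, c * g x ≤ f x)
    (htop : eLpNorm g p μ = ⊤) : eLpNorm f p μ = ⊤ := by
  refine eq_top_iff.2 <| calc
    ⊤ = ‖c‖ₑ * eLpNorm g p μ := by rw [htop, mul_top (enorm_ne_zero.2 hc.ne')]
    _ = eLpNorm (c • g) p μ := (eLpNorm_const_smul c g p μ).symm
    _ ≤ eLpNorm f p μ := eLpNorm_mono fun x => ?_
  have hcg : 0 ≤ c * g x := mul_nonneg hc.le (hg x)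
  rw [Pi.smul_apply, smul_eq_mul, Real.norm_of_nonneg hcg]
  exact (hgf x).trans (le_abs_self _)

theorem memLp_ite_norm_le_one {V : Type*} [NormedAddCommGroup V] [ProperSpace V]
    [MeasurableSpace V] [BorelSpace V] (μ : Measure V) [IsFiniteMeasureOnCompacts μ]
    (p : ℝ≥0∞) : MemLp (fun y : V => if ‖y‖ ≤ 1 then (1 : ℝ) else 0) p μ := by
  convert memLp_indicator_const (μ := μ) p (measurableSet_closedBall (x := (0 : V)) (ε := 1))
    (1 : ℝ) (.inr measure_closedBall_lt_top.ne) using 1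
  ext y
  simp [indicator]

theorem stmt14_general (n₁ n₂ m : ℕ)
    (lam q : ℝ) (hq0 : 0 < q) (hlam : lam = m / q)
    (hlam0 : 0 < lam) (hlamn : lam < n₁ + n₂)
    (D₁ : Matrix (Fin n₁) (Fin m) ℝ) (D₂ : Matrix (Fin n₂) (Fin m) ℝ) :
    (∃ c : ℝ, 0 < c ∧ ∀ x : E m, c * (1 + ‖x‖) ^ (-lam) ≤
        ∫ y₁ : E n₁, ∫ y₂ : E n₂, (if ‖y₁‖ ≤ 1 then (1:ℝ) else 0) *
          (if ‖y₂‖ ≤ 1 then (1:ℝ) else 0) *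
          (‖mvec D₁ x - y₁‖ + ‖mvec D₂ x - y₂‖) ^ (-lam) ∂volume ∂volume) ∧
    eLpNorm (fun x : E m =>
        ∫ y₁ : E n₁, ∫ y₂ : E n₂, (if ‖y₁‖ ≤ 1 then (1:ℝ) else 0) *
          (if ‖y₂‖ ≤ 1 then (1:ℝ) else 0) *
          (‖mvec D₁ x - y₁‖ + ‖mvec D₂ x - y₂‖) ^ (-lam) ∂volume ∂volume)
      (ENNReal.ofReal q) volume = ⊤ ∧
    ¬ ∃ C : ℝ, ∀ (f₁ : E n₁ → ℝ) (f₂ : E n₂ → ℝ),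
        MemLp f₁ 1 volume → MemLp f₂ 1 volume →
        eLpNorm (fun x : E m => ∫ y₁ : E n₁, ∫ y₂ : E n₂, f₁ y₁ * f₂ y₂ *
            (‖mvec D₁ x - y₁‖ + ‖mvec D₂ x - y₂‖) ^ (-lam) ∂volume ∂volume)
          (ENNReal.ofReal q) volume
          ≤ ENNReal.ofReal C * eLpNorm f₁ 1 volume * eLpNorm f₂ 1 volume := by
  have hm : (0 : ℝ) < m := (div_pos_iff_of_pos_right hq0).1 (by rwa [hlam] at hlam0)
  have : Nontrivial (E m) := Module.nontrivial_of_finrank_pos (R := ℝ) <| by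
    rw [finrank_euclideanSpace_fin]; exact_mod_cast hm
  obtain ⟨c, hc, hlow⟩ := exists_mul_one_add_norm_rpow_le_integral_unitBallKernel volume volume
    hlam0 (by simpa only [finrank_euclideanSpace_fin] using hlamn)
    (Matrix.toEuclideanLin D₁).toContinuousLinearMap
    (Matrix.toEuclideanLin D₂).toContinuousLinearMap
  have htop := eLpNorm_eq_top_of_const_mul_le hc (fun x => by positivity) hlow <| by
    simpa only [hlam, finrank_euclideanSpace_fin] using
      eLpNorm_one_add_norm_rpow_neg_eq_top (volume : Measure (E m)) hq0
  refine ⟨⟨c, hc, hlow⟩, htop, fun ⟨C, hC⟩ => ?_⟩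
  have hχ₁ := memLp_ite_norm_le_one (volume : Measure (E n₁)) 1
  have hχ₂ := memLp_ite_norm_le_one (volume : Measure (E n₂)) 1
  have hbound := hC _ _ hχ₁ hχ₂
  exact (mul_lt_top (mul_lt_top ofReal_lt_top hχ₁.eLpNorm_lt_top) hχ₂.eLpNorm_lt_top).ne
    (top_le_iff.1 (htop.symm.le.trans hbound))

/-- The case `p₁ = p₂ = 1` always fails: with `λ = m/q`, `0 < q < ∞`,
`0 < λ < n₁+n₂` and `f_i = χ_{|y_i|≤1}`, the bilinear fractional integral of
`(f₁,f₂)` is bounded below by a multiple of `(1+|x|)^{−λ}`, is not in `L^q(ℝ^m)`,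
and consequently `I_{λ,D}` is not bounded from `L¹ × L¹` to `L^q`. -/
theorem stmt14 (n₁ n₂ m : ℕ) (hn₁ : 0 < n₁) (hn₂ : 0 < n₂) (hm : 0 < m)
    (lam q : ℝ) (hq0 : 0 < q) (hlam : lam = m / q)
    (hlam0 : 0 < lam) (hlamn : lam < n₁ + n₂)
    (D₁ : Matrix (Fin n₁) (Fin m) ℝ) (D₂ : Matrix (Fin n₂) (Fin m) ℝ) :
    (∃ c : ℝ, 0 < c ∧ ∀ x : E m, c * (1 + ‖x‖) ^ (-lam) ≤
        ∫ y₁ : E n₁, ∫ y₂ : E n₂, (if ‖y₁‖ ≤ 1 then (1:ℝ) else 0) *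
          (if ‖y₂‖ ≤ 1 then (1:ℝ) else 0) *
          (‖mvec D₁ x - y₁‖ + ‖mvec D₂ x - y₂‖) ^ (-lam) ∂volume ∂volume) ∧
    eLpNorm (fun x : E m =>
        ∫ y₁ : E n₁, ∫ y₂ : E n₂, (if ‖y₁‖ ≤ 1 then (1:ℝ) else 0) *
          (if ‖y₂‖ ≤ 1 then (1:ℝ) else 0) *
          (‖mvec D₁ x - y₁‖ + ‖mvec D₂ x - y₂‖) ^ (-lam) ∂volume ∂volume)
      (ENNReal.ofReal q) volume = ⊤ ∧
    ¬ ∃ C : ℝ, ∀ (f₁ : E n₁ → ℝ) (f₂ : E n₂ → ℝ),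
        MemLp f₁ 1 volume → MemLp f₂ 1 volume →
        eLpNorm (fun x : E m => ∫ y₁ : E n₁, ∫ y₂ : E n₂, f₁ y₁ * f₂ y₂ *
            (‖mvec D₁ x - y₁‖ + ‖mvec D₂ x - y₂‖) ^ (-lam) ∂volume ∂volume)
          (ENNReal.ofReal q) volume
          ≤ ENNReal.ofReal C * eLpNorm f₁ 1 volume * eLpNorm f₂ 1 volume :=
  stmt14_general n₁ n₂ m lam q hq0 hlam hlam0 hlamn D₁ D₂
end
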